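/- arXiv:2406.02997 — 10 statements merged into one kernel-verified Lean document; each statement's English description precedes it below -/
import Mathlib

section
/- For the linear residual GNN, let Kr(A, X^{(0)}) := span{A^{i−1}·X^{(0)}_{:,j} : i ∈ {1,…,n}, j ∈ {1,…,k}} be the Krylov subspace of A and X^{(0)}. For any target matrix Y ∈ ℝ^{n×k}, there exist T ∈ ℕ and weight matrices W₁^{(0)}, W₂^{(0)}, …, W₁^{(T−1)}, W₂^{(T−1)} such that X^{(T)} = Y if and only if every column of Y lies in Kr(A, X^{(0)}). -/
/-!
The Krylov subspace `Kr` of `A` and `X⁰` is `A`-invariant by Cayley–Hamilton, since `Aⁿ` is a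
combination of `A⁰, …, Aⁿ⁻¹`; it contains the columns of `X⁰`, and a set of columns lying in `Kr`
stays in `Kr` under right multiplication by any `k × k` matrix. Hence every iterate `X⁽ᵗ⁾` has its
columns in `Kr`. Conversely, a matrix with columns in `Kr` has the form `∑_{i<n} Aⁱ X⁰ Cᵢ`, and
since `α` and `1 - α` are invertible the weights can be chosen so that the iteration runs Horner's
scheme `Z ↦ A Z + X⁰ Cᵢ` on it.
-/

open Matrix Submodule Finset

namespace Matrix

variable {R : Type*} [CommRing R] {n k : ℕ}

theorem pow_mem_span_range_pow [Nontrivial R] (A : Matrix (Fin n) (Fin n) R) (m : ℕ) :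
    A ^ m ∈ span R (Set.range fun i : Fin n => A ^ (i : ℕ)) := by
  rcases n.eq_zero_or_pos with rfl | hn
  · simp [Subsingleton.elim (A ^ m) 0]
  have hdeg : (Polynomial.X ^ m %ₘ A.charpoly).natDegree < n := by
    simpa using Polynomial.natDegree_modByMonic_lt _ A.charpoly_monic fun h =>
      hn.ne (by simpa [h] using A.charpoly_natDegree_eq_dim)
  rw [pow_eq_aeval_mod_charpoly, Polynomial.aeval_eq_sum_range' hdeg,
    ← Fin.sum_univ_eq_sum_range (fun i => _ • A ^ i)]
  exact sum_mem fun i _ => smul_mem _ _ (subset_span ⟨i, rfl⟩)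

theorem mulVec_mem_of_col_mem {m o : Type*} [Fintype o] {K : Submodule R (m → R)}
    {M : Matrix m o R} (hM : ∀ j, (fun r => M r j) ∈ K) (w : o → R) : M *ᵥ w ∈ K := by
  simp only [mulVec_eq_sum, op_smul_eq_smul]
  exact sum_mem fun j _ => K.smul_mem (w j) (hM j)

theorem horner_sum_range_succ {m o : Type*} [Fintype m] [Fintype o] [DecidableEq m]
    (A : Matrix m m R) (X : Matrix m o R) (V : ℕ → Matrix o o R) (t : ℕ) :
    ∑ i ∈ range (t + 1), A ^ i * X * V (t - i) =
      A * ∑ i ∈ range t, A ^ i * X * V (t - 1 - i) + X * V t := by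
  rw [sum_range_succ', Matrix.mul_sum]
  congr 1
  · refine sum_congr rfl fun i _ => ?_
    rw [pow_succ', Matrix.mul_assoc, Matrix.mul_assoc, Matrix.mul_assoc, Nat.sub_sub, add_comm 1]
  · simp

def krylovSubspace (A : Matrix (Fin n) (Fin n) R) (X : Matrix (Fin n) (Fin k) R) :
    Submodule R (Fin n → R) :=
  span R {w | ∃ (i : Fin n) (j : Fin k), w = (A ^ (i : ℕ)) *ᵥ (fun r => X r j)}

section Krylov

variable (A : Matrix (Fin n) (Fin n) R) (X : Matrix (Fin n) (Fin k) R)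

theorem pow_mulVec_mem_krylovSubspace [Nontrivial R] (m : ℕ) (j : Fin k) :
    A ^ m *ᵥ (fun r => X r j) ∈ krylovSubspace A X := by
  have h := mem_map_of_mem
    (f := LinearMap.applyₗ (fun r => X r j) ∘ₗ (toLin' : _ ≃ₗ[R] _).toLinearMap)
    (pow_mem_span_range_pow A m)
  rw [map_span] at h
  refine span_mono ?_ h
  rintro _ ⟨_, ⟨i, rfl⟩, rfl⟩
  exact ⟨i, j, rfl⟩

variable {A X}

theorem mulVec_mem_krylovSubspace [Nontrivial R] {v : Fin n → R}
    (hv : v ∈ krylovSubspace A X) : A *ᵥ v ∈ krylovSubspace A X := by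
  refine (span_le (p := (krylovSubspace A X).comap (mulVecLin A))).2 ?_ hv
  rintro _ ⟨i, j, rfl⟩
  simpa [mulVec_mulVec, ← pow_succ'] using pow_mulVec_mem_krylovSubspace A X (i + 1) j

theorem col_mem_krylovSubspace_of_recurrence [Nontrivial R] {a b : R}
    {W₁ W₂ : ℕ → Matrix (Fin k) (Fin k) R} {Z : ℕ → Matrix (Fin n) (Fin k) R} (h0 : Z 0 = X)
    (hsucc : ∀ t, Z (t + 1) = a • (A * Z t * W₁ t) + b • (X * W₂ t)) (t : ℕ) (j : Fin k) :
    (fun r => Z t r j) ∈ krylovSubspace A X := by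
  have hX : ∀ j, (fun r => X r j) ∈ krylovSubspace A X := fun j => by
    simpa using pow_mulVec_mem_krylovSubspace A X 0 j
  induction t generalizing j with
  | zero => subst h0; exact hX j
  | succ t ih =>
    rw [hsucc]
    have hAZ : ∀ j, (fun r => (A * Z t) r j) ∈ krylovSubspace A X := fun j =>
      mulVec_mem_krylovSubspace (ih j)
    exact add_mem (smul_mem _ _ (mulVec_mem_of_col_mem hAZ _))
      (smul_mem _ _ (mulVec_mem_of_col_mem hX _))

theorem exists_eq_sum_pow_mul_mul_of_col_mem {Y : Matrix (Fin n) (Fin k) R}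
    (hY : ∀ j, (fun r => Y r j) ∈ krylovSubspace A X) :
    ∃ C : ℕ → Matrix (Fin k) (Fin k) R, Y = ∑ i ∈ range n, A ^ i * X * C i := by
  have hgen : {w | ∃ (i : Fin n) (j : Fin k), w = (A ^ (i : ℕ)) *ᵥ (fun r => X r j)} =
      Set.range fun p : Fin n × Fin k => A ^ (p.1 : ℕ) *ᵥ fun r => X r p.2 := by
    ext; simp [eq_comm]
  simp only [krylovSubspace, hgen, mem_span_range_iff_exists_fun] at hY
  choose d hd using hY
  refine ⟨fun i => of fun m j => if h : i < n then d j (⟨i, h⟩, m) else 0, ?_⟩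
  ext r j
  rw [← Fin.sum_univ_eq_sum_range]
  refine (congrFun (hd j) r).symm.trans ?_
  simp [Fintype.sum_prod_type, mul_apply, mulVec, dotProduct, sum_apply, Finset.mul_sum, mul_comm]

end Krylov

end Matrix

theorem exists_residual_trajectory_eq_sum {K : Type*} [Field K] {m o : Type*} [Fintype m]
    [Fintype o] [DecidableEq m] [DecidableEq o] {α : K} (hα : α ≠ 0) (hα1 : α ≠ 1)
    (A : Matrix m m K) (X : Matrix m o K) (C : ℕ → Matrix o o K) (T : ℕ) :
    ∃ (W₁ W₂ : ℕ → Matrix o o K) (Z : ℕ → Matrix m o K), Z 0 = X ∧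
      (∀ t, Z (t + 1) = (1 - α) • (A * Z t * W₁ t) + α • (X * W₂ t)) ∧
      Z (T + 1) = ∑ i ∈ range T, A ^ i * X * C i := by
  -- The first step erases `X`; afterwards `Z (t + 1) = A * Z t + X * V t`.
  let V : ℕ → Matrix o o K := fun s => C (T - 1 - s)
  refine ⟨fun | 0 => 0 | _ + 1 => (1 - α)⁻¹ • 1, fun | 0 => 0 | t + 1 => α⁻¹ • V t,
    fun | 0 => X | t + 1 => ∑ i ∈ range t, A ^ i * X * V (t - 1 - i), rfl, ?_, ?_⟩
  · rintro (_ | t)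
    · simp
    · dsimp only
      rw [Nat.add_sub_cancel, horner_sum_range_succ]
      simp [smul_smul, sub_ne_zero.2 hα1.symm, hα]
  · refine sum_congr rfl fun i hi => ?_
    have : T - 1 - (T - 1 - i) = i := by grind
    simp only [V, this]

theorem stmt_0_general {n k : ℕ}
    (A : Matrix (Fin n) (Fin n) ℝ)
    (α : ℝ) (hα : α ∈ Set.Ioo (0 : ℝ) 1)
    (X0 : Matrix (Fin n) (Fin k) ℝ)
    (Kr : Submodule ℝ (Fin n → ℝ))
    (hKr : Kr = Submodule.span ℝ
      {w : Fin n → ℝ | ∃ (i : Fin n) (j : Fin k), w = (A ^ (i : ℕ)) *ᵥ (fun r => X0 r j)})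
    (Y : Matrix (Fin n) (Fin k) ℝ) :
    (∃ (T : ℕ) (W₁ W₂ : ℕ → Matrix (Fin k) (Fin k) ℝ)
        (X : ℕ → Matrix (Fin n) (Fin k) ℝ),
        X 0 = X0 ∧
        (∀ t, X (t + 1) = (1 - α) • (A * X t * W₁ t) + α • (X0 * W₂ t)) ∧
        X T = Y)
      ↔ (∀ j : Fin k, (fun r => Y r j) ∈ Kr) := by
  change Kr = A.krylovSubspace X0 at hKr
  subst hKr
  constructor
  · rintro ⟨T, W₁, W₂, X, h0, hsucc, rfl⟩
    exact col_mem_krylovSubspace_of_recurrence h0 hsucc T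
  · intro hY
    obtain ⟨C, rfl⟩ := exists_eq_sum_pow_mul_mul_of_col_mem hY
    obtain ⟨W₁, W₂, X, h0, hsucc, hX⟩ :=
      exists_residual_trajectory_eq_sum hα.1.ne' hα.2.ne A X0 C n
    exact ⟨n + 1, W₁, W₂, X, h0, hsucc, hX⟩

/-- For the linear residual GNN
`X^{(t+1)} = (1−α)·A·X^{(t)}·W₁^{(t)} + α·X^{(0)}·W₂^{(t)}`,
a target matrix `Y` is reachable (i.e. there exist `T` and weight matrices with `X^{(T)} = Y`)
iff every column of `Y` lies in the Krylov subspace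
`Kr(A, X⁰) = span{A^(i-1)·X⁰_{:,j} : i ∈ [n], j ∈ [k]}`. -/
theorem stmt_0 {n k : ℕ}
    (A : Matrix (Fin n) (Fin n) ℝ) (hA : A.IsSymm)
    (α : ℝ) (hα : α ∈ Set.Ioo (0 : ℝ) 1)
    (X0 : Matrix (Fin n) (Fin k) ℝ)
    (Kr : Submodule ℝ (Fin n → ℝ))
    (hKr : Kr = Submodule.span ℝ
      {w : Fin n → ℝ | ∃ (i : Fin n) (j : Fin k), w = (A ^ (i : ℕ)) *ᵥ (fun r => X0 r j)})
    (Y : Matrix (Fin n) (Fin k) ℝ) :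
    (∃ (T : ℕ) (W₁ W₂ : ℕ → Matrix (Fin k) (Fin k) ℝ)
        (X : ℕ → Matrix (Fin n) (Fin k) ℝ),
        X 0 = X0 ∧
        (∀ t, X (t + 1) = (1 - α) • (A * X t * W₁ t) + α • (X0 * W₂ t)) ∧
        X T = Y)
      ↔ (∀ j : Fin k, (fun r => Y r j) ∈ Kr) :=
  stmt_0_general A α hα X0 Kr hKr Y
end

section
/- Let ν ∈ ℝⁿ be an eigenvector of A with νᵀ·X^{(0)} = 0. Then for every choice of weight matrices W₁^{(t)}, W₂^{(t)} and every t ≥ 0, νᵀ·X^{(t)} = 0; that is, signal components not present in the initial features can never be created by the residual GNN. -/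
/-!
If `ν` is a left eigenvector of `A`, then `νᵀ A X W = λ (νᵀ X) W`, so the propagation term keeps
`X` in the left annihilator of `ν`; symmetry of `A` turns the given right eigenvector into a left
one. The skip connection term vanishes because `νᵀ X⁽⁰⁾ = 0`.
-/

open Matrix

namespace Matrix

variable {m n o R : Type*} [Fintype m] [Fintype n]

theorem IsSymm.vecMul_eq_smul_of_mulVec_eq_smul [CommSemiring R] {A : Matrix n n R}
    (hA : A.IsSymm) {ν : n → R} {lam : R} (heig : A *ᵥ ν = lam • ν) : ν ᵥ* A = lam • ν := by
  rw [← heig, ← vecMul_transpose, hA.eq]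

theorem vecMul_mul_mul_eq_zero_of_vecMul_eq_smul [CommSemiring R] {A : Matrix n n R}
    {ν : n → R} {lam : R} (hνA : ν ᵥ* A = lam • ν) {X : Matrix n m R} (hX : ν ᵥ* X = 0)
    (W : Matrix m o R) : ν ᵥ* (A * X * W) = 0 := by
  rw [← vecMul_vecMul, ← vecMul_vecMul, hνA, smul_vecMul, hX, smul_zero, zero_vecMul]

theorem vecMul_mul_eq_zero [NonUnitalSemiring R] {ν : n → R} {X : Matrix n m R}
    (hX : ν ᵥ* X = 0) (W : Matrix m o R) : ν ᵥ* (X * W) = 0 := by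
  rw [← vecMul_vecMul, hX, zero_vecMul]

end Matrix

theorem stmt_4_general {n k : ℕ}
    (A : Matrix (Fin n) (Fin n) ℝ) (hA : A.IsSymm)
    (α : ℝ)
    (X0 : Matrix (Fin n) (Fin k) ℝ)
    (ν : Fin n → ℝ) (lam : ℝ)
    (heig : A *ᵥ ν = lam • ν)
    (h0 : ν ᵥ* X0 = 0) :
    ∀ (W₁ W₂ : ℕ → Matrix (Fin k) (Fin k) ℝ)
      (X : ℕ → Matrix (Fin n) (Fin k) ℝ),
      X 0 = X0 →
      (∀ t, X (t + 1) = (1 - α) • (A * X t * W₁ t) + α • (X0 * W₂ t)) →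
      ∀ t, ν ᵥ* X t = 0 := by
  intro W₁ W₂ X hX0 hrec t
  have hνA : ν ᵥ* A = lam • ν := hA.vecMul_eq_smul_of_mulVec_eq_smul heig
  induction t with
  | zero => rw [hX0, h0]
  | succ t ih =>
    rw [hrec t, vecMul_add, vecMul_smul, vecMul_smul,
      vecMul_mul_mul_eq_zero_of_vecMul_eq_smul hνA ih, vecMul_mul_eq_zero h0,
      smul_zero, smul_zero, add_zero]

/-- For the linear residual GNN
`X^{(t+1)} = (1−α)·A·X^{(t)}·W₁^{(t)} + α·X^{(0)}·W₂^{(t)}`: if `ν` is an eigenvector of `A`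
with `νᵀ·X^{(0)} = 0`, then for every choice of weights and every `t`, `νᵀ·X^{(t)} = 0`. -/
theorem stmt_4 {n k : ℕ}
    (A : Matrix (Fin n) (Fin n) ℝ) (hA : A.IsSymm)
    (α : ℝ) (hα : α ∈ Set.Ioo (0 : ℝ) 1)
    (X0 : Matrix (Fin n) (Fin k) ℝ)
    (ν : Fin n → ℝ) (hν : ν ≠ 0) (lam : ℝ)
    (heig : A *ᵥ ν = lam • ν)
    (h0 : ν ᵥ* X0 = 0) :
    ∀ (W₁ W₂ : ℕ → Matrix (Fin k) (Fin k) ℝ)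
      (X : ℕ → Matrix (Fin n) (Fin k) ℝ),
      X 0 = X0 →
      (∀ t, X (t + 1) = (1 - α) • (A * X t * W₁ t) + α • (X0 * W₂ t)) →
      ∀ t, ν ᵥ* X t = 0 :=
  stmt_4_general A hA α X0 ν lam heig h0
end

section
/- Suppose there exists ε > 0 such that for every t ≥ 1 and every eigenvalue λ_i of A, the smallest singular value of B_{λ_i}^{(t)} is at least ε. Let v ∈ ℝⁿ be a unit vector, and let ν_q be a unit eigenvector of A with ν_qᵀ·v = 0 and ‖ν_qᵀ·X^{(0)}‖₂ = c > 0. Then ‖X^{(t)} − v·vᵀ·X^{(t)}‖_F ≥ c·ε/√k for all t ≥ 1. -/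
/-!
Since `ν_q` is a left eigenvector of `A`, the row `ν_qᵀ X⁽ᵗ⁾` obeys a closed recursion and equals
`ν_qᵀ X⁽⁰⁾ B_{λ_q}⁽ᵗ⁾`; as `σ_min(Bᵀ) = σ_min(B)`, its norm is at least `ε c`. The projection
`I - v vᵀ` does not change this row because `ν_q ⊥ v`, and the Frobenius norm of a matrix dominates
the norm of `uᵀ M` for every unit vector `u`.
-/

open Matrix Finset

/-- The matrix `B_λ^{(t)} = Σ_{m=0}^{t−1} α·(1−α)^m·λ^m·W₂^{(t−1−m)}·W₁^{(t−m)}···W₁^{(t−1)}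
+ (1−α)^t·λ^t·W₁^{(0)}···W₁^{(t−1)}` (ordered products; empty products are `I_k`). -/
noncomputable def Bmat {k : ℕ} (α : ℝ) (W₁ W₂ : ℕ → Matrix (Fin k) (Fin k) ℝ)
    (lam : ℝ) (t : ℕ) : Matrix (Fin k) (Fin k) ℝ :=
  (∑ m ∈ Finset.range t,
      (α * (1 - α) ^ m * lam ^ m) •
        (W₂ (t - 1 - m) * ((List.range' (t - m) m).map W₁).prod))
    + ((1 - α) ^ t * lam ^ t) • ((List.range' 0 t).map W₁).prod

lemma List.prod_map_range'_succ {M : Type*} [Monoid M] (f : ℕ → M) (s m : ℕ) :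
    ((List.range' s (m + 1)).map f).prod = ((List.range' s m).map f).prod * f (s + m) := by
  simp [List.range'_concat]

section Bmat

variable {k : ℕ} (α : ℝ) (W₁ W₂ : ℕ → Matrix (Fin k) (Fin k) ℝ) (μ : ℝ)

lemma Bmat_zero : Bmat α W₁ W₂ μ 0 = 1 := by
  simp [Bmat]

lemma Bmat_succ (t : ℕ) :
    Bmat α W₁ W₂ μ (t + 1) = ((1 - α) * μ) • (Bmat α W₁ W₂ μ t * W₁ t) + α • W₂ t := by
  have hterm : ∀ m ∈ range t,
      (α * (1 - α) ^ (m + 1) * μ ^ (m + 1)) •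
          (W₂ (t + 1 - 1 - (m + 1)) * ((List.range' (t + 1 - (m + 1)) (m + 1)).map W₁).prod)
        = ((1 - α) * μ) •
            ((α * (1 - α) ^ m * μ ^ m) •
              (W₂ (t - 1 - m) * ((List.range' (t - m) m).map W₁).prod) * W₁ t) := by
    intro m hm
    have hmt : t - m + m = t := Nat.sub_add_cancel (mem_range.mp hm).le
    rw [show t + 1 - (m + 1) = t - m by omega, show t + 1 - 1 - (m + 1) = t - 1 - m by omega,
      List.prod_map_range'_succ, hmt, smul_mul_assoc, smul_smul, Matrix.mul_assoc]
    congr 1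
    ring
  rw [Bmat, Bmat, sum_range_succ', sum_congr rfl hterm, List.prod_map_range'_succ, add_mul,
    smul_add, sum_mul, smul_sum, smul_mul_assoc, smul_smul]
  simp only [zero_add, pow_zero, mul_one, Nat.add_sub_cancel, Nat.sub_zero, List.range'_zero,
    List.map_nil, List.prod_nil]
  rw [show (1 - α) ^ (t + 1) * μ ^ (t + 1) = (1 - α) * μ * ((1 - α) ^ t * μ ^ t) by ring]
  abel

end Bmat

lemma vecMul_eq_vecMul_Bmat {ι : Type*} [Fintype ι] {k : ℕ} {A : Matrix ι ι ℝ} {α : ℝ}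
    {X0 : Matrix ι (Fin k) ℝ} {W₁ W₂ : ℕ → Matrix (Fin k) (Fin k) ℝ}
    {X : ℕ → Matrix ι (Fin k) ℝ} (hX0 : X 0 = X0)
    (hXrec : ∀ t, X (t + 1) = (1 - α) • (A * X t * W₁ t) + α • (X0 * W₂ t))
    {u : ι → ℝ} {μ : ℝ} (hu : u ᵥ* A = μ • u) (t : ℕ) :
    u ᵥ* X t = (u ᵥ* X0) ᵥ* Bmat α W₁ W₂ μ t := by
  induction t with
  | zero => rw [hX0, Bmat_zero, vecMul_one]
  | succ t ih =>
    simp only [hXrec, Bmat_succ, vecMul_add, vecMul_smul, ← vecMul_vecMul, hu, smul_vecMul, ih,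
      smul_smul]

lemma mul_sqrt_le_sqrt_sum_vecMul_sq {ι : Type*} [Fintype ι] [DecidableEq ι]
    {B : Matrix ι ι ℝ} {ε : ℝ}
    (hB : ∀ x : ι → ℝ, ε * √(∑ j, x j ^ 2) ≤ √(∑ j, (B *ᵥ x) j ^ 2)) (y : ι → ℝ) :
    ε * √(∑ j, y j ^ 2) ≤ √(∑ j, (y ᵥ* B) j ^ 2) := by
  rcases le_or_gt ε 0 with hε | hε
  · exact (mul_nonpos_of_nonpos_of_nonneg hε (Real.sqrt_nonneg _)).trans (Real.sqrt_nonneg _)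
  have hsq : ∀ z : ι → ℝ, ∑ j, z j ^ 2 = z ⬝ᵥ z := fun z => by simp [dotProduct, sq]
  have hinj : Function.Injective B.mulVec := by
    intro a b hab
    have h := hB (a - b)
    rw [mulVec_sub, hab, sub_self] at h
    have h0 : √(∑ j, (a - b) j ^ 2) = 0 :=
      le_antisymm (nonpos_of_mul_nonpos_right (by simpa using h) hε) (Real.sqrt_nonneg _)
    rw [Real.sqrt_eq_zero', hsq] at h0
    exact sub_eq_zero.1 <| dotProduct_self_eq_zero.1 <|
      le_antisymm h0 (by rw [← hsq]; positivity)
  obtain ⟨x, rfl⟩ := mulVec_surjective_iff_isUnit.2 (mulVec_injective_iff_isUnit.1 hinj) y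
  set y := B *ᵥ x
  set ny := √(∑ j, y j ^ 2)
  set nz := √(∑ j, (y ᵥ* B) j ^ 2)
  -- `‖y‖² = ⟪yᵀB, x⟫ ≤ ‖yᵀB‖ ‖x‖ ≤ ‖yᵀB‖ ‖y‖ / ε`
  have hcs : ny ^ 2 ≤ nz * √(∑ j, x j ^ 2) :=
    calc ny ^ 2 = (y ᵥ* B) ⬝ᵥ x := by
          rw [Real.sq_sqrt (by positivity), hsq, ← dotProduct_mulVec]
      _ ≤ _ := Real.sum_mul_le_sqrt_mul_sqrt _ _ _
  have key : ε * ny * ny ≤ nz * ny :=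
    calc ε * ny * ny = ε * ny ^ 2 := by ring
      _ ≤ nz * (ε * √(∑ j, x j ^ 2)) := by nlinarith [Real.sqrt_nonneg (∑ j, x j ^ 2)]
      _ ≤ nz * ny := mul_le_mul_of_nonneg_left (hB x) (Real.sqrt_nonneg _)
  have hny : 0 ≤ ny := Real.sqrt_nonneg _
  rcases hny.eq_or_lt with hy | hy
  · rw [← hy, mul_zero]
    exact Real.sqrt_nonneg _
  · exact le_of_mul_le_mul_right key hy

lemma sum_vecMul_sq_le_sum_sum_sq {ι κ : Type*} [Fintype ι] [Fintype κ] {u : ι → ℝ}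
    (hu : ∑ r, u r ^ 2 = 1) (M : Matrix ι κ ℝ) :
    ∑ j, (u ᵥ* M) j ^ 2 ≤ ∑ r, ∑ j, M r j ^ 2 := by
  rw [sum_comm]
  refine sum_le_sum fun j _ => ?_
  calc (u ᵥ* M) j ^ 2 = (∑ r, u r * M r j) ^ 2 := rfl
    _ ≤ (∑ r, u r ^ 2) * ∑ r, M r j ^ 2 := sum_mul_sq_le_sq_mul_sq _ _ _
    _ = ∑ r, M r j ^ 2 := by rw [hu, one_mul]

lemma vecMul_sub_vecMulVec_mul {ι κ : Type*} [Fintype ι] {u v : ι → ℝ} (huv : u ⬝ᵥ v = 0)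
    (M : Matrix ι κ ℝ) : u ᵥ* (M - vecMulVec v v * M) = u ᵥ* M := by
  rw [vecMul_sub, ← vecMul_vecMul, vecMul_vecMulVec, huv, zero_smul, zero_vecMul, sub_zero]

lemma div_sqrt_natCast_le_self {a : ℝ} (ha : 0 ≤ a) (k : ℕ) : a / √k ≤ a := by
  rcases Nat.eq_zero_or_pos k with rfl | hk
  · simpa using ha
  · exact div_le_self ha (Real.one_le_sqrt.2 (by exact_mod_cast hk))

theorem stmt_8_general {n k : ℕ}
    (A : Matrix (Fin n) (Fin n) ℝ) (hA : A.IsSymm)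
    (α : ℝ)
    (X0 : Matrix (Fin n) (Fin k) ℝ)
    (W₁ W₂ : ℕ → Matrix (Fin k) (Fin k) ℝ)
    (X : ℕ → Matrix (Fin n) (Fin k) ℝ)
    (hX0 : X 0 = X0)
    (hXrec : ∀ t, X (t + 1) = (1 - α) • (A * X t * W₁ t) + α • (X0 * W₂ t))
    -- an orthonormal eigenbasis of the symmetric matrix `A`
    (lam : Fin n → ℝ) (ν : Fin n → Fin n → ℝ)
    (heig : ∀ i, A *ᵥ ν i = lam i • ν i)
    (horth : ∀ i j, ν i ⬝ᵥ ν j = if i = j then (1 : ℝ) else 0)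
    -- the smallest singular value of every `B_{λ_i}^{(t)}` is at least `ε`
    (ε : ℝ) (hε : 0 < ε)
    (hB : ∀ t, 1 ≤ t → ∀ (i : Fin n) (x : Fin k → ℝ),
      ε * Real.sqrt (∑ j, x j ^ 2)
        ≤ Real.sqrt (∑ j, ((Bmat α W₁ W₂ (lam i) t) *ᵥ x) j ^ 2))
    (v : Fin n → ℝ)
    (q : Fin n) (hqv : ν q ⬝ᵥ v = 0)
    (c : ℝ)
    (hc0 : Real.sqrt (∑ j, (ν q ᵥ* X0) j ^ 2) = c) :
    ∀ t, 1 ≤ t →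
      c * ε / Real.sqrt k
        ≤ Real.sqrt (∑ r, ∑ j,
            ((X t - (Matrix.of fun a b => v a * v b) * X t) r j) ^ 2) := by
  intro t ht
  have hνA : ν q ᵥ* A = lam q • ν q := by rw [← hA.eq, vecMul_transpose, heig]
  have hν : ∑ r, ν q r ^ 2 = 1 := by simpa [dotProduct, sq] using horth q q
  have hc : 0 ≤ c := hc0 ▸ Real.sqrt_nonneg _
  calc c * ε / √k ≤ ε * c := mul_comm c ε ▸ div_sqrt_natCast_le_self (by positivity) k
    _ ≤ √(∑ j, (ν q ᵥ* X t) j ^ 2) := by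
      rw [vecMul_eq_vecMul_Bmat hX0 hXrec hνA, ← hc0]
      exact mul_sqrt_le_sqrt_sum_vecMul_sq (hB t ht q) _
    _ = √(∑ j, (ν q ᵥ* (X t - vecMulVec v v * X t)) j ^ 2) := by
      rw [vecMul_sub_vecMulVec_mul hqv]
    _ ≤ _ := Real.sqrt_le_sqrt (sum_vecMul_sq_le_sum_sum_sq hν _)

/-- For the linear residual GNN: if for some `ε > 0` the smallest singular
value of every `B_{λ_i}^{(t)}` (for `t ≥ 1` and every eigenvalue `λ_i` of `A`) is at least `ε`
(encoded as `‖B_{λ_i}^{(t)}·x‖₂ ≥ ε·‖x‖₂` for all `x`), `v` is a unit vector, and `ν_q` is a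
unit eigenvector of `A` orthogonal to `v` with `‖ν_qᵀ·X^{(0)}‖₂ = c > 0`, then
`‖X^{(t)} − v·vᵀ·X^{(t)}‖_F ≥ c·ε/√k` for all `t ≥ 1`. -/
theorem stmt_8 {n k : ℕ}
    (A : Matrix (Fin n) (Fin n) ℝ) (hA : A.IsSymm)
    (α : ℝ) (hα : α ∈ Set.Ioo (0 : ℝ) 1)
    (X0 : Matrix (Fin n) (Fin k) ℝ)
    (W₁ W₂ : ℕ → Matrix (Fin k) (Fin k) ℝ)
    (X : ℕ → Matrix (Fin n) (Fin k) ℝ)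
    (hX0 : X 0 = X0)
    (hXrec : ∀ t, X (t + 1) = (1 - α) • (A * X t * W₁ t) + α • (X0 * W₂ t))
    -- an orthonormal eigenbasis of the symmetric matrix `A`
    (lam : Fin n → ℝ) (ν : Fin n → Fin n → ℝ)
    (heig : ∀ i, A *ᵥ ν i = lam i • ν i)
    (horth : ∀ i j, ν i ⬝ᵥ ν j = if i = j then (1 : ℝ) else 0)
    -- the smallest singular value of every `B_{λ_i}^{(t)}` is at least `ε`
    (ε : ℝ) (hε : 0 < ε)
    (hB : ∀ t, 1 ≤ t → ∀ (i : Fin n) (x : Fin k → ℝ),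
      ε * Real.sqrt (∑ j, x j ^ 2)
        ≤ Real.sqrt (∑ j, ((Bmat α W₁ W₂ (lam i) t) *ᵥ x) j ^ 2))
    (v : Fin n → ℝ) (hv : Real.sqrt (∑ r, v r ^ 2) = 1)
    (q : Fin n) (hqv : ν q ⬝ᵥ v = 0)
    (c : ℝ) (hc : 0 < c)
    (hc0 : Real.sqrt (∑ j, (ν q ᵥ* X0) j ^ 2) = c) :
    ∀ t, 1 ≤ t →
      c * ε / Real.sqrt k
        ≤ Real.sqrt (∑ r, ∑ j,
            ((X t - (Matrix.of fun a b => v a * v b) * X t) r j) ^ 2) :=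
  stmt_8_general A hA α X0 W₁ W₂ X hX0 hXrec lam ν heig horth ε hε hB v q hqv c hc0
end

section
/- Suppose V_kᵀ·X^{(0)} ∈ ℝ^{k×k} has rank k and |λ_k| > |λ_{k+1}|. Then for every choice of weight matrices W^{(t)}, the iterates converge exponentially to the column space of V_k: there exists C > 0 such that ‖X^{(t)} − V_k·V_kᵀ·X^{(t)}‖_F ≤ C·(|λ_{k+1}|/|λ_k|)^t for all t ≥ 0. -/
open Matrix

/-- Column batch-normalization of a vector: subtract the mean, then rescale to unit ℓ₂-norm. -/
noncomputable def bn {n : ℕ} (x : Fin n → ℝ) : Fin n → ℝ :=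
  (Real.sqrt (∑ i, (x i - (∑ j, x j) / n) ^ 2))⁻¹ • fun i => x i - (∑ j, x j) / n

/-- BatchNorm: apply `bn` to every column of `X`. -/
noncomputable def BN {n k : ℕ} (X : Matrix (Fin n) (Fin k) ℝ) : Matrix (Fin n) (Fin k) ℝ :=
  Matrix.of fun r j => bn (fun a => X a j) r

/-!
Since `BN Z = P Z D` with `P = I − 11ᵀ/n` and `D` diagonal, every iterate has the form
`X⁽ᵗ⁾ = Mᵗ X⁽⁰⁾ Bₜ`, so each column is `Mᵗ u` for some `u` in the column space of `X⁽⁰⁾`.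
In the eigenbasis of `M`, the component of `Mᵗ u` orthogonal to the span of `V_k` has norm at
most `|λ_{k+1}|ᵗ ‖u‖`, whereas `1 = ‖Mᵗ u‖ ≥ |λ_k|ᵗ ‖V_kᵀ u‖`. Invertibility of `V_kᵀ X⁽⁰⁾`
gives `‖u‖ ≤ c ‖V_kᵀ u‖` uniformly in `t`, and dividing yields the rate `(|λ_{k+1}|/|λ_k|)ᵗ`.
-/

noncomputable def centering (n : ℕ) : Matrix (Fin n) (Fin n) ℝ :=
  1 - (n : ℝ)⁻¹ • of fun _ _ => 1

theorem BN_eq_centering_mul_mul_diagonal {n k : ℕ} (Z : Matrix (Fin n) (Fin k) ℝ) :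
    ∃ d : Fin k → ℝ, BN Z = centering n * Z * diagonal d := by
  refine ⟨fun j => (√(∑ i, (Z i j - (∑ r, Z r j) / n) ^ 2))⁻¹, ?_⟩
  ext r j
  rw [mul_diagonal, centering, Matrix.sub_mul, Matrix.one_mul, Matrix.smul_mul]
  simp only [BN, bn, of_apply, Pi.smul_apply, smul_eq_mul, Matrix.sub_apply, Matrix.smul_apply,
    Matrix.mul_apply, one_mul]
  ring

theorem sum_sq_bn_eq_one {n : ℕ} (x : Fin n → ℝ) (h : ¬ ∃ c : ℝ, ∀ r, x r = c) :
    ∑ r, bn x r ^ 2 = 1 := by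
  set y : Fin n → ℝ := fun i => x i - (∑ j, x j) / n
  have hy : ∑ i, y i ^ 2 ≠ 0 := by
    intro h0
    refine h ⟨(∑ j, x j) / n, fun r => ?_⟩
    have := (Finset.sum_eq_zero_iff_of_nonneg fun i _ => sq_nonneg (y i)).mp h0 r
      (Finset.mem_univ r)
    simpa only [y, pow_eq_zero_iff two_ne_zero, sub_eq_zero] using this
  calc ∑ r, bn x r ^ 2 = (√(∑ i, y i ^ 2))⁻¹ ^ 2 * ∑ r, y r ^ 2 := by
        simp only [bn, Pi.smul_apply, smul_eq_mul, mul_pow, Finset.mul_sum]; rfl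
    _ = 1 := by
        rw [inv_pow, Real.sq_sqrt (Finset.sum_nonneg fun _ _ => sq_nonneg _), inv_mul_cancel₀ hy]

theorem exists_eq_pow_mul_mul_of_BN {n k : ℕ} {A : Matrix (Fin n) (Fin n) ℝ}
    {W : ℕ → Matrix (Fin k) (Fin k) ℝ} {X : ℕ → Matrix (Fin n) (Fin k) ℝ}
    (hrec : ∀ t, X (t + 1) = BN (A * X t * W t)) (t : ℕ) :
    ∃ B : Matrix (Fin k) (Fin k) ℝ, X t = (centering n * A) ^ t * X 0 * B := by
  induction t with
  | zero => exact ⟨1, by rw [pow_zero, Matrix.one_mul, Matrix.mul_one]⟩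
  | succ t ih =>
    obtain ⟨B, hB⟩ := ih
    obtain ⟨d, hd⟩ := BN_eq_centering_mul_mul_diagonal (A * X t * W t)
    refine ⟨B * W t * diagonal d, ?_⟩
    rw [hrec t, hd, hB, pow_succ']
    simp only [Matrix.mul_assoc]

section Orthonormal

variable {ι κ : Type*} [Fintype ι] [DecidableEq ι] [Fintype κ] {ν : ι → ι → ℝ}
  {M : Matrix ι ι ℝ} {lam : ι → ℝ} {e : κ → ι}

theorem of_mul_transpose_eq_one (horth : ∀ i j, ν i ⬝ᵥ ν j = if i = j then 1 else 0) :
    of ν * (of ν)ᵀ = 1 := by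
  ext i j
  simpa [Matrix.mul_apply, Matrix.one_apply, dotProduct] using horth i j

theorem sum_sq_dotProduct_eq (horth : ∀ i j, ν i ⬝ᵥ ν j = if i = j then 1 else 0)
    (x : ι → ℝ) : ∑ i, (ν i ⬝ᵥ x) ^ 2 = ∑ r, x r ^ 2 := by
  have hQ : (of ν)ᵀ * of ν = 1 := mul_eq_one_comm.mp (of_mul_transpose_eq_one horth)
  calc ∑ i, (ν i ⬝ᵥ x) ^ 2 = (of ν *ᵥ x) ⬝ᵥ (of ν *ᵥ x) := by
        simp only [dotProduct, sq]; rfl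
    _ = x ⬝ᵥ x := by
        rw [dotProduct_mulVec, ← mulVec_transpose, mulVec_mulVec, hQ, one_mulVec]
    _ = ∑ r, x r ^ 2 := by simp only [dotProduct, sq]

theorem dotProduct_pow_mulVec_of_eigen (horth : ∀ i j, ν i ⬝ᵥ ν j = if i = j then 1 else 0)
    (heig : ∀ i, M *ᵥ ν i = lam i • ν i) (t : ℕ) (u : ι → ℝ) (i : ι) :
    ν i ⬝ᵥ (M ^ t *ᵥ u) = lam i ^ t * (ν i ⬝ᵥ u) := by
  have hMQ : M * (of ν)ᵀ = (of ν)ᵀ * diagonal lam := by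
    ext r j
    rw [mul_diagonal]
    simpa [Matrix.mul_apply, mulVec, dotProduct, mul_comm] using congrFun (heig j) r
  -- `of ν` is orthogonal, so the right eigenvector relation `hMQ` yields the left one
  have hsemi : SemiconjBy (of ν) M (diagonal lam) := by
    calc of ν * M = of ν * M * ((of ν)ᵀ * of ν) := by
          rw [mul_eq_one_comm.mp (of_mul_transpose_eq_one horth), Matrix.mul_one]
      _ = of ν * (of ν)ᵀ * diagonal lam * of ν := by
          rw [Matrix.mul_assoc (of ν) M, ← Matrix.mul_assoc M, hMQ]
          simp only [Matrix.mul_assoc]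
      _ = diagonal lam * of ν := by rw [of_mul_transpose_eq_one horth, Matrix.one_mul]
  have h := congrFun (congrArg (· *ᵥ u) (hsemi.pow_right t)) i
  rw [← mulVec_mulVec, ← mulVec_mulVec, diagonal_pow, mulVec_diagonal, Pi.pow_apply] at h
  exact h

theorem dotProduct_sub_mulVec_transpose_mulVec
    (horth : ∀ i j, ν i ⬝ᵥ ν j = if i = j then 1 else 0) (he : Function.Injective e)
    (x : ι → ℝ) (i : ι) :
    ν i ⬝ᵥ (x - (of fun r j => ν (e j) r) *ᵥ ((of fun r j => ν (e j) r)ᵀ *ᵥ x))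
      = if i ∈ Set.range e then 0 else ν i ⬝ᵥ x := by
  have hproj : ν i ⬝ᵥ ((of fun r j => ν (e j) r) *ᵥ ((of fun r j => ν (e j) r)ᵀ *ᵥ x))
      = ∑ j, (if i = e j then 1 else 0) * (ν (e j) ⬝ᵥ x) := by
    rw [dotProduct_mulVec]
    refine Finset.sum_congr rfl fun j _ => ?_
    rw [← horth]
    rfl
  rw [dotProduct_sub, hproj]
  split_ifs with hi
  · obtain ⟨j, rfl⟩ := hi
    rw [Finset.sum_eq_single j (fun j' _ hj' => by rw [if_neg (he.ne hj'.symm), zero_mul])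
      (by simp), if_pos rfl, one_mul, sub_self]
  · rw [Finset.sum_eq_zero fun j _ => by rw [if_neg fun h => hi ⟨j, h.symm⟩, zero_mul], sub_zero]

theorem sum_sq_residual_pow_mulVec_le (horth : ∀ i j, ν i ⬝ᵥ ν j = if i = j then 1 else 0)
    (heig : ∀ i, M *ᵥ ν i = lam i • ν i) (he : Function.Injective e) {μ : ℝ}
    (hμ : ∀ i ∉ Set.range e, |lam i| ≤ μ) (t : ℕ) (u : ι → ℝ) :
    ∑ r, (M ^ t *ᵥ u - (of fun r j => ν (e j) r) *ᵥ
        ((of fun r j => ν (e j) r)ᵀ *ᵥ (M ^ t *ᵥ u))) r ^ 2 ≤ (μ ^ 2) ^ t * ∑ r, u r ^ 2 := by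
  rw [← sum_sq_dotProduct_eq horth, ← sum_sq_dotProduct_eq horth u, Finset.mul_sum]
  refine Finset.sum_le_sum fun i _ => ?_
  rw [dotProduct_sub_mulVec_transpose_mulVec horth he]
  split_ifs with hi
  · rw [zero_pow two_ne_zero]
    positivity
  · have hsq : lam i ^ 2 ≤ μ ^ 2 := sq_le_sq.mpr ((hμ i hi).trans (le_abs_self μ))
    rw [dotProduct_pow_mulVec_of_eigen horth heig, mul_pow, pow_right_comm _ t 2]
    gcongr

theorem pow_mul_sum_sq_le_sum_sq_pow_mulVec (horth : ∀ i j, ν i ⬝ᵥ ν j = if i = j then 1 else 0)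
    (heig : ∀ i, M *ᵥ ν i = lam i • ν i) (he : Function.Injective e) {ρ : ℝ} (hρ0 : 0 ≤ ρ)
    (hρ : ∀ j, ρ ≤ |lam (e j)|) (t : ℕ) (u : ι → ℝ) :
    (ρ ^ 2) ^ t * ∑ j, (ν (e j) ⬝ᵥ u) ^ 2 ≤ ∑ r, (M ^ t *ᵥ u) r ^ 2 := by
  rw [← sum_sq_dotProduct_eq horth, Finset.mul_sum]
  calc ∑ j, (ρ ^ 2) ^ t * (ν (e j) ⬝ᵥ u) ^ 2
      ≤ ∑ j, (ν (e j) ⬝ᵥ (M ^ t *ᵥ u)) ^ 2 := by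
        refine Finset.sum_le_sum fun j _ => ?_
        have hsq : ρ ^ 2 ≤ lam (e j) ^ 2 := sq_le_sq.mpr ((abs_of_nonneg hρ0).trans_le (hρ j))
        rw [dotProduct_pow_mulVec_of_eigen horth heig, mul_pow, pow_right_comm _ t 2]
        gcongr
    _ = ∑ i ∈ Finset.univ.map ⟨e, he⟩, (ν i ⬝ᵥ (M ^ t *ᵥ u)) ^ 2 := by rw [Finset.sum_map]; rfl
    _ ≤ ∑ i, (ν i ⬝ᵥ (M ^ t *ᵥ u)) ^ 2 :=
        Finset.sum_le_univ_sum_of_nonneg fun _ => sq_nonneg _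

theorem sum_sq_residual_le_of_spectral_gap
    (horth : ∀ i j, ν i ⬝ᵥ ν j = if i = j then 1 else 0)
    (heig : ∀ i, M *ᵥ ν i = lam i • ν i) (he : Function.Injective e) {V : Matrix ι κ ℝ}
    (hV : V = of fun r j => ν (e j) r) {μ ρ c : ℝ}
    (hμ : ∀ i ∉ Set.range e, |lam i| ≤ μ) (hρ0 : 0 < ρ) (hρ : ∀ j, ρ ≤ |lam (e j)|)
    {u : ι → ℝ} (hu : ∑ r, u r ^ 2 ≤ c * ∑ j, (Vᵀ *ᵥ u) j ^ 2) (hc : 0 ≤ c) (t : ℕ) :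
    ∑ r, (M ^ t *ᵥ u - V *ᵥ (Vᵀ *ᵥ (M ^ t *ᵥ u))) r ^ 2
      ≤ c * ((μ / ρ) ^ t) ^ 2 * ∑ r, (M ^ t *ᵥ u) r ^ 2 := by
  subst hV
  have hρt : 0 < (ρ ^ 2) ^ t := by positivity
  have htop : ∑ j, (ν (e j) ⬝ᵥ u) ^ 2 ≤ (∑ r, (M ^ t *ᵥ u) r ^ 2) / (ρ ^ 2) ^ t :=
    (le_div_iff₀' hρt).mpr (pow_mul_sum_sq_le_sum_sq_pow_mulVec horth heig he hρ0.le hρ t u)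
  calc _ ≤ (μ ^ 2) ^ t * ∑ r, u r ^ 2 := sum_sq_residual_pow_mulVec_le horth heig he hμ t u
    _ ≤ (μ ^ 2) ^ t * (c * ((∑ r, (M ^ t *ᵥ u) r ^ 2) / (ρ ^ 2) ^ t)) := by
        gcongr
        exact hu.trans (mul_le_mul_of_nonneg_left htop hc)
    _ = c * ((μ / ρ) ^ t) ^ 2 * ∑ r, (M ^ t *ᵥ u) r ^ 2 := by
        rw [div_pow, div_pow, ← pow_mul, ← pow_mul, ← pow_mul, ← pow_mul, mul_comm t]
        ring

end Orthonormal

theorem sum_sq_mulVec_le {m κ : Type*} [Fintype m] [Fintype κ] (A : Matrix m κ ℝ) (v : κ → ℝ) :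
    ∑ r, (A *ᵥ v) r ^ 2 ≤ (∑ r, ∑ j, A r j ^ 2) * ∑ j, v j ^ 2 := by
  rw [Finset.sum_mul]
  exact Finset.sum_le_sum fun r _ => Finset.sum_mul_sq_le_sq_mul_sq _ _ _

theorem sum_sq_le_mul_sum_sq_transpose_mulVec {m κ : Type*} [Fintype m] [Fintype κ]
    [DecidableEq κ] (V X₀ : Matrix m κ ℝ) (hN : IsUnit (Vᵀ * X₀).det) (b : κ → ℝ) :
    ∑ r, (X₀ *ᵥ b) r ^ 2
      ≤ (∑ r, ∑ j, (X₀ * (Vᵀ * X₀)⁻¹) r j ^ 2) * ∑ j, (Vᵀ *ᵥ (X₀ *ᵥ b)) j ^ 2 := by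
  have hb : X₀ *ᵥ b = (X₀ * (Vᵀ * X₀)⁻¹) *ᵥ (Vᵀ *ᵥ (X₀ *ᵥ b)) := by
    rw [mulVec_mulVec, mulVec_mulVec, Matrix.mul_assoc (X₀ * _), Matrix.mul_assoc X₀,
      nonsing_inv_mul _ hN, Matrix.mul_one]
  conv_lhs => rw [hb]
  exact sum_sq_mulVec_le _ _

theorem isUnit_det_of_rank_eq_card {K κ : Type*} [Field K] [Fintype κ] [DecidableEq κ]
    (N : Matrix κ κ K) (h : N.rank = Fintype.card κ) : IsUnit N.det := by
  have htop : LinearMap.range N.mulVecLin = ⊤ :=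
    Submodule.eq_top_of_finrank_eq (by rw [← rank, h, Module.finrank_fintype_fun_eq_card])
  refine (isUnit_iff_isUnit_det N).mp (mulVec_surjective_iff_isUnit.mp fun v => ?_)
  exact LinearMap.range_eq_top.mp htop v

theorem sqrt_sum_sum_sq_le {m κ : Type*} [Fintype m] [Fintype κ] (Y : Matrix m κ ℝ) {c s : ℝ}
    (hs : 0 ≤ s) (h : ∀ j, ∑ r, Y r j ^ 2 ≤ c * s ^ 2) :
    √(∑ r, ∑ j, Y r j ^ 2) ≤ √(Fintype.card κ * c) * s := by
  have hsum : ∑ r, ∑ j, Y r j ^ 2 ≤ Fintype.card κ * c * s ^ 2 := by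
    rw [Finset.sum_comm]
    calc _ ≤ ∑ _j : κ, c * s ^ 2 := Finset.sum_le_sum fun j _ => h j
      _ = _ := by rw [Finset.sum_const, Finset.card_univ, nsmul_eq_mul, mul_assoc]
  calc _ ≤ √(Fintype.card κ * c * s ^ 2) := Real.sqrt_le_sqrt hsum
    _ = _ := by rw [Real.sqrt_mul' _ (sq_nonneg s), Real.sqrt_sq hs]

/-- For the linearized GNN with BatchNorm
`X^{(t+1)} = BN(A·X^{(t)}·W^{(t)})`: if `V_kᵀ·X^{(0)}` has rank `k` and `|λ_k| > |λ_{k+1}|`,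
then for every choice of weights the iterates converge exponentially to the column space of
`V_k`: there is `C > 0` with `‖X^{(t)} − V_k·V_kᵀ·X^{(t)}‖_F ≤ C·(|λ_{k+1}|/|λ_k|)^t`. -/
theorem stmt_10 {n k : ℕ} (hkn : k < n)
    (A : Matrix (Fin n) (Fin n) ℝ)
    (X0 : Matrix (Fin n) (Fin k) ℝ)
    (hX0unit : ∀ j, Real.sqrt (∑ r, (X0 r j) ^ 2) = 1)
    -- an orthonormal eigenbasis of the centered operator `M = (I − 11ᵀ/n)·A`,
    -- ordered by decreasing absolute eigenvalue
    (lam : Fin n → ℝ) (ν : Fin n → Fin n → ℝ)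
    (heig : ∀ i,
      (((1 : Matrix (Fin n) (Fin n) ℝ) - (n : ℝ)⁻¹ • Matrix.of fun _ _ => (1 : ℝ)) * A) *ᵥ ν i
        = lam i • ν i)
    (horth : ∀ i j, ν i ⬝ᵥ ν j = if i = j then (1 : ℝ) else 0)
    (hord : ∀ i j : Fin n, i ≤ j → |lam j| ≤ |lam i|)
    -- `V_k`: the top-`k` eigenvectors as columns
    (Vk : Matrix (Fin n) (Fin k) ℝ)
    (hVk : Vk = Matrix.of fun r j => ν (Fin.castLE hkn.le j) r)
    (hrank : Matrix.rank (Vkᵀ * X0) = k)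
    (hgap : |lam ⟨k, hkn⟩| < |lam ⟨k - 1, by omega⟩|) :
    ∀ (W : ℕ → Matrix (Fin k) (Fin k) ℝ) (X : ℕ → Matrix (Fin n) (Fin k) ℝ),
      X 0 = X0 →
      (∀ t, X (t + 1) = BN (A * X t * W t)) →
      -- every update is well-defined: no column of `A·X^{(t)}·W^{(t)}` is constant
      (∀ t (j : Fin k), ¬ ∃ c : ℝ, ∀ r, (A * X t * W t) r j = c) →
      ∃ C > 0, ∀ t,
        Real.sqrt (∑ r, ∑ j, ((X t - Vk * Vkᵀ * X t) r j) ^ 2)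
          ≤ C * (|lam ⟨k, hkn⟩| / |lam ⟨k - 1, by omega⟩|) ^ t := by
  intro W X hX hrec hwell
  have heig' : ∀ i, (centering n * A) *ᵥ ν i = lam i • ν i := heig
  have hN : IsUnit (Vkᵀ * X0).det := isUnit_det_of_rank_eq_card _ (by simpa using hrank)
  have hunit : ∀ t j, ∑ r, (X t)ᵀ j r ^ 2 = 1
    | 0, j => by rw [hX]; exact Real.sqrt_eq_one.mp (hX0unit j)
    | t + 1, j => by rw [hrec t]; exact sum_sq_bn_eq_one _ (hwell t j)
  have hlow : ∀ i ∉ Set.range (Fin.castLE hkn.le), |lam i| ≤ |lam ⟨k, hkn⟩| := fun i hi =>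
    hord _ _ (Fin.le_def.mpr (not_lt.mp fun h => hi ⟨⟨i, h⟩, rfl⟩))
  have htop : ∀ j, |lam ⟨k - 1, by omega⟩| ≤ |lam (Fin.castLE hkn.le j)| := fun j =>
    hord _ _ (Fin.le_def.mpr (by simp only [Fin.val_castLE]; omega))
  set c := ∑ r, ∑ j, (X0 * (Vkᵀ * X0)⁻¹) r j ^ 2
  set s := |lam ⟨k, hkn⟩| / |lam ⟨k - 1, by omega⟩|
  refine ⟨√(k * c) + 1, by positivity, fun t => ?_⟩
  obtain ⟨B, hB⟩ := exists_eq_pow_mul_mul_of_BN hrec t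
  have hcol : ∀ j, ∑ r, (X t - Vk * Vkᵀ * X t) r j ^ 2 ≤ c * (s ^ t) ^ 2 := by
    intro j
    have hx : (X t)ᵀ j = (centering n * A) ^ t *ᵥ (X0 *ᵥ Bᵀ j) := by
      rw [hB, hX, mulVec_mulVec]; rfl
    have hres : ∀ r, (X t - Vk * Vkᵀ * X t) r j = ((X t)ᵀ j - Vk *ᵥ (Vkᵀ *ᵥ (X t)ᵀ j)) r :=
      fun r => by rw [mulVec_mulVec]; rfl
    have := sum_sq_residual_le_of_spectral_gap horth heig' (Fin.castLE_injective hkn.le) hVk hlow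
      ((abs_nonneg _).trans_lt hgap) htop
      (sum_sq_le_mul_sum_sq_transpose_mulVec _ X0 hN (Bᵀ j)) (by positivity) t
    rw [← hx, hunit, mul_one] at this
    simpa only [hres] using this
  calc _ ≤ √(Fintype.card (Fin k) * c) * s ^ t := sqrt_sum_sum_sq_le _ (by positivity) hcol
    _ ≤ (√(k * c) + 1) * s ^ t := by rw [Fintype.card_fin]; gcongr; linarith
end

section
/- Suppose V_kᵀ·X^{(0)} ∈ ℝ^{k×k} has rank k and |λ_k| > |λ_{k+1}|. Then for every ε > 0 there exist T ∈ ℕ and a sequence of weight matrices W^{(0)}, W^{(1)}, …, W^{(T)} (with W^{(t)} = I_k for t > T) such that for all t ≥ T and all i ∈ {1,…,k}, |ν_iᵀ·X^{(t)}_{:,i}| ≥ 1/√(1+ε). -/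
open Matrix

lemma isUnit_det_of_rank_eq_card_s12 {m : ℕ} (B : Matrix (Fin m) (Fin m) ℝ)
    (h : B.rank = m) : IsUnit B.det := by
  rw [isUnit_iff_ne_zero]
  intro hdet0
  obtain ⟨v, hv0, hv⟩ := Matrix.exists_mulVec_eq_zero_iff.mpr hdet0
  have hsurj : Function.Surjective B.mulVecLin := by
    rw [← LinearMap.range_eq_top]
    apply Submodule.eq_top_of_finrank_eq
    rw [Module.finrank_fin_fun]
    exact h
  have hinj : Function.Injective B.mulVecLin :=
    (LinearMap.injective_iff_surjective).mpr hsurj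
  have : B.mulVecLin v = B.mulVecLin 0 := by simpa [Matrix.mulVecLin_apply] using hv
  exact hv0 (by simpa using hinj this)

/-- For the linearized GNN with BatchNorm
`X^{(t+1)} = BN(A·X^{(t)}·W^{(t)})`: if `V_kᵀ·X^{(0)}` has rank `k` and `|λ_k| > |λ_{k+1}|`,
then for every `ε > 0` there are `T` and weights `W^{(0)},…,W^{(T)}` (with `W^{(t)} = I_k`
for `t > T`) such that for all `t ≥ T` and `i ∈ [k]`, `|ν_iᵀ·X^{(t)}_{:,i}| ≥ 1/√(1+ε)`. -/
theorem stmt_12 {n k : ℕ} (hk : 0 < k) (hkn : k < n)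
    (A : Matrix (Fin n) (Fin n) ℝ) (hA : A.IsSymm)
    (X0 : Matrix (Fin n) (Fin k) ℝ)
    (hX0unit : ∀ j, Real.sqrt (∑ r, (X0 r j) ^ 2) = 1)
    -- an orthonormal eigenbasis of the centered operator `M = (I − 11ᵀ/n)·A`,
    -- ordered by decreasing absolute eigenvalue
    (lam : Fin n → ℝ) (ν : Fin n → Fin n → ℝ)
    (heig : ∀ i,
      (((1 : Matrix (Fin n) (Fin n) ℝ) - (n : ℝ)⁻¹ • Matrix.of fun _ _ => (1 : ℝ)) * A) *ᵥ ν i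
        = lam i • ν i)
    (horth : ∀ i j, ν i ⬝ᵥ ν j = if i = j then (1 : ℝ) else 0)
    (hord : ∀ i j : Fin n, i ≤ j → |lam j| ≤ |lam i|)
    -- `V_k`: the top-`k` eigenvectors as columns
    (Vk : Matrix (Fin n) (Fin k) ℝ)
    (hVk : Vk = Matrix.of fun r j => ν (Fin.castLE hkn.le j) r)
    (hrank : Matrix.rank (Vkᵀ * X0) = k)
    (hgap : |lam ⟨k, hkn⟩| < |lam ⟨k - 1, by omega⟩|)
    (ε : ℝ) (hε : 0 < ε) :
    ∃ (T : ℕ) (W : ℕ → Matrix (Fin k) (Fin k) ℝ),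
      (∀ t, T < t → W t = 1) ∧
      ∀ X : ℕ → Matrix (Fin n) (Fin k) ℝ,
        X 0 = X0 →
        (∀ t, X (t + 1) = BN (A * X t * W t)) →
        ∀ t, T ≤ t → ∀ i : Fin k,
          1 / Real.sqrt (1 + ε) ≤ |ν (Fin.castLE hkn.le i) ⬝ᵥ fun r => X t r i| := by
  classical
  set M : Matrix (Fin n) (Fin n) ℝ :=
    ((1 : Matrix (Fin n) (Fin n) ℝ) - (n : ℝ)⁻¹ • Matrix.of fun _ _ => (1 : ℝ)) * A with hMdef
  set K : Fin n := ⟨k, hkn⟩ with hKdef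
  set Km : Fin n := ⟨k - 1, by omega⟩ with hKmdef
  -- eigenvalue order facts
  have hKmpos : 0 < |lam Km| := lt_of_le_of_lt (abs_nonneg _) hgap
  have hKmne : lam Km ≠ 0 := abs_pos.mp hKmpos
  have hordKm : ∀ i : Fin k, |lam Km| ≤ |lam (Fin.castLE hkn.le i)| := by
    intro i
    apply hord
    simp only [Fin.le_def, Fin.coe_castLE, hKmdef]
    omega
  have hordK : ∀ j : Fin n, k ≤ (j : ℕ) → |lam j| ≤ |lam K| := by
    intro j hj
    apply hord
    simpa [Fin.le_def, hKdef] using hj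
  have hlami : ∀ i : Fin k, lam (Fin.castLE hkn.le i) ≠ 0 := by
    intro i
    exact abs_pos.mp (lt_of_lt_of_le hKmpos (hordKm i))
  have hKm2pos : 0 < (lam Km) ^ 2 := by positivity
  set g : ℝ := (lam K) ^ 2 / (lam Km) ^ 2 with hgdef
  have hg0 : 0 ≤ g := div_nonneg (sq_nonneg _) (sq_nonneg _)
  have hg1 : g < 1 := by
    rw [hgdef, div_lt_one hKm2pos]
    have := pow_lt_pow_left₀ hgap (abs_nonneg _) two_ne_zero
    simpa [sq_abs] using this
  have hKg : ∀ i : Fin k, (lam K) ^ 2 ≤ g * (lam (Fin.castLE hkn.le i)) ^ 2 := by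
    intro i
    have h1 : (lam Km) ^ 2 ≤ (lam (Fin.castLE hkn.le i)) ^ 2 := by
      have := pow_le_pow_left₀ (abs_nonneg _) (hordKm i) 2
      simpa [sq_abs] using this
    calc (lam K) ^ 2 = g * (lam Km) ^ 2 := by
          rw [hgdef]; field_simp
      _ ≤ g * (lam (Fin.castLE hkn.le i)) ^ 2 := mul_le_mul_of_nonneg_left h1 hg0
  -- invertibility of C
  set C : Matrix (Fin k) (Fin k) ℝ := Vkᵀ * X0 with hCdef
  have hCunit : IsUnit C.det := isUnit_det_of_rank_eq_card_s12 C hrank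
  have hCinv : C * C⁻¹ = 1 := Matrix.mul_nonsing_inv C hCunit
  -- spectral expansion facts
  have hcomp : ∀ r s : Fin n, (∑ j, ν j r * ν j s) = if r = s then (1 : ℝ) else 0 := by
    have hVV : (Matrix.of fun i r => ν i r) * (Matrix.of fun i r => ν i r)ᵀ
        = (1 : Matrix (Fin n) (Fin n) ℝ) := by
      ext i j
      simpa [Matrix.mul_apply, Matrix.one_apply, dotProduct] using horth i j
    have hVtV := mul_eq_one_comm.mp hVV
    intro r s
    have h2 : ((Matrix.of fun i r => ν i r)ᵀ * (Matrix.of fun i r => ν i r)) r s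
        = (1 : Matrix (Fin n) (Fin n) ℝ) r s := by rw [hVtV]
    simpa [Matrix.mul_apply, Matrix.one_apply] using h2
  have hexp : ∀ (x : Fin n → ℝ) (r : Fin n), x r = ∑ j, (ν j ⬝ᵥ x) * ν j r := by
    intro x r
    calc x r = ∑ s, (if r = s then (1 : ℝ) else 0) * x s := by
          simp [ite_mul]
      _ = ∑ s, (∑ j, ν j r * ν j s) * x s := by
          refine Finset.sum_congr rfl fun s _ => ?_
          rw [hcomp]
      _ = ∑ s, ∑ j, (ν j r * ν j s) * x s := by
          refine Finset.sum_congr rfl fun s _ => ?_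
          rw [Finset.sum_mul]
      _ = ∑ j, ∑ s, (ν j r * ν j s) * x s := Finset.sum_comm
      _ = ∑ j, (ν j ⬝ᵥ x) * ν j r := by
          refine Finset.sum_congr rfl fun j _ => ?_
          rw [dotProduct, Finset.sum_mul]
          refine Finset.sum_congr rfl fun s _ => ?_
          ring
  have hpars : ∀ x : Fin n → ℝ, ∑ j, (ν j ⬝ᵥ x) ^ 2 = ∑ r, (x r) ^ 2 := by
    intro x
    calc ∑ j, (ν j ⬝ᵥ x) ^ 2 = ∑ j, ∑ r, ((ν j ⬝ᵥ x) * ν j r) * x r := by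
          refine Finset.sum_congr rfl fun j _ => ?_
          rw [sq]
          conv_lhs => rw [dotProduct]
          rw [Finset.mul_sum]
          refine Finset.sum_congr rfl fun r _ => ?_
          rw [dotProduct]
          ring
      _ = ∑ r, (∑ j, (ν j ⬝ᵥ x) * ν j r) * x r := by
          rw [Finset.sum_comm]
          exact Finset.sum_congr rfl fun r _ => (Finset.sum_mul _ _ _).symm
      _ = ∑ r, (x r) ^ 2 := by
          refine Finset.sum_congr rfl fun r _ => ?_
          rw [← hexp x r, sq]
  have hMv : ∀ x : Fin n → ℝ, M *ᵥ x = ∑ j, ((ν j ⬝ᵥ x) * lam j) • ν j := by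
    intro x
    have hx : x = ∑ j, (ν j ⬝ᵥ x) • ν j := by
      funext r
      rw [hexp x r]
      simp [Finset.sum_apply]
    calc M *ᵥ x = M.mulVecLin (∑ j, (ν j ⬝ᵥ x) • ν j) := by
          rw [← hx, Matrix.mulVecLin_apply]
      _ = ∑ j, M.mulVecLin ((ν j ⬝ᵥ x) • ν j) := map_sum _ _ _
      _ = ∑ j, ((ν j ⬝ᵥ x) * lam j) • ν j := by
          refine Finset.sum_congr rfl fun j _ => ?_
          rw [_root_.map_smul, Matrix.mulVecLin_apply, heig, smul_smul]
  have hproj : ∀ (x : Fin n → ℝ) (j : Fin n), ν j ⬝ᵥ (M *ᵥ x) = lam j * (ν j ⬝ᵥ x) := by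
    intro x j
    rw [hMv]
    calc ν j ⬝ᵥ (∑ p, ((ν p ⬝ᵥ x) * lam p) • ν p)
        = ∑ p, ((ν p ⬝ᵥ x) * lam p) * (ν j ⬝ᵥ ν p) := by
          rw [dotProduct]
          simp only [Finset.sum_apply, Pi.smul_apply, smul_eq_mul]
          calc ∑ r, ν j r * ∑ p, ((ν p ⬝ᵥ x) * lam p) * ν p r
              = ∑ r, ∑ p, ((ν p ⬝ᵥ x) * lam p) * (ν j r * ν p r) := by
                refine Finset.sum_congr rfl fun r _ => ?_
                rw [Finset.mul_sum]
                exact Finset.sum_congr rfl fun p _ => by ring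
            _ = ∑ p, ∑ r, ((ν p ⬝ᵥ x) * lam p) * (ν j r * ν p r) := Finset.sum_comm
            _ = ∑ p, ((ν p ⬝ᵥ x) * lam p) * (ν j ⬝ᵥ ν p) := by
                refine Finset.sum_congr rfl fun p _ => ?_
                rw [show ν j ⬝ᵥ ν p = ∑ r, ν j r * ν p r from rfl, Finset.mul_sum]
      _ = lam j * (ν j ⬝ᵥ x) := by
          simp only [horth]
          rw [Finset.sum_eq_single j]
          · simp [mul_comm]
          · intro p _ hp
            simp [Ne.symm hp]
          · intro h
            exact absurd (Finset.mem_univ j) h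
  have hnormsq : ∀ x : Fin n → ℝ,
      ∑ r, ((M *ᵥ x) r) ^ 2 = ∑ j, (lam j) ^ 2 * (ν j ⬝ᵥ x) ^ 2 := by
    intro x
    rw [← hpars (M *ᵥ x)]
    refine Finset.sum_congr rfl fun j _ => ?_
    rw [hproj, mul_pow]
  -- BN column formula
  have hBNcol : ∀ (B : Matrix (Fin n) (Fin k) ℝ) (i : Fin k) (r : Fin n),
      BN (A * B) r i
        = (Real.sqrt (∑ r', ((M *ᵥ fun s => B s i) r') ^ 2))⁻¹ * (M *ᵥ fun s => B s i) r := by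
    intro B i r
    have hcen : ∀ s : Fin n, (A * B) s i - (∑ p, (A * B) p i) / (n : ℝ)
        = (M *ᵥ fun u => B u i) s := by
      intro s
      have h1 : (M *ᵥ fun u => B u i) s = (M * B) s i := by
        simp [Matrix.mulVec, Matrix.mul_apply, dotProduct]
      have h2 : M * B = A * B - (n : ℝ)⁻¹ • ((Matrix.of fun _ _ => (1 : ℝ)) * (A * B)) := by
        rw [hMdef, Matrix.mul_assoc, Matrix.sub_mul, Matrix.one_mul, Matrix.smul_mul]
        rfl
      have h3 : ((Matrix.of fun (_ : Fin n) (_ : Fin n) => (1 : ℝ)) * (A * B)) s i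
          = ∑ p, (A * B) p i := by
        simp [Matrix.mul_apply]
      rw [h1, h2]
      simp only [Matrix.sub_apply, Matrix.smul_apply, h3, smul_eq_mul, div_eq_inv_mul]
      exact (congrArg (fun z => (A * B) s i - (n : ℝ)⁻¹ * z) h3).symm
    have hsum : (∑ r', ((A * B) r' i - (∑ j', (A * B) j' i) / (n : ℝ)) ^ 2)
        = ∑ r', ((M *ᵥ fun s => B s i) r') ^ 2 :=
      Finset.sum_congr rfl fun p _ => by rw [hcen p]
    show bn (fun s => (A * B) s i) r = _
    simp only [bn, Pi.smul_apply, smul_eq_mul]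
    rw [hcen r, hsum]
  -- weights and trajectory
  set Wf : ℕ → Matrix (Fin k) (Fin k) ℝ := fun t => if t = 0 then C⁻¹ else 1 with hWfdef
  obtain ⟨Xh, hXh0, hXhS⟩ : ∃ f : ℕ → Matrix (Fin n) (Fin k) ℝ,
      f 0 = X0 ∧ ∀ t, f (t + 1) = BN (A * f t * Wf t) :=
    ⟨fun t => Nat.rec X0 (fun t Xt => BN (A * Xt * Wf t)) t, rfl, fun _ => rfl⟩
  obtain ⟨a, ha⟩ : ∃ a : ℕ → Fin k → Fin n → ℝ,
      ∀ t i j, a t i j = ν j ⬝ᵥ fun r => Xh t r i := ⟨_, fun _ _ _ => rfl⟩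
  obtain ⟨S, hS⟩ : ∃ S : ℕ → Fin k → ℝ,
      ∀ t i, S t i = ∑ j ∈ Finset.univ.filter (fun j : Fin n => k ≤ (j : ℕ)), a t i j ^ 2 :=
    ⟨_, fun _ _ => rfl⟩
  have hSnn : ∀ t i, 0 ≤ S t i := by
    intro t i; rw [hS]; positivity
  -- coefficient recursion
  have hastep : ∀ (t : ℕ) (Y : Matrix (Fin n) (Fin k) ℝ), Xh (t + 1) = BN (A * Y) →
      ∀ i j, a (t + 1) i j
        = (Real.sqrt (∑ p, (lam p) ^ 2 * ((ν p ⬝ᵥ fun s => Y s i)) ^ 2))⁻¹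
          * (lam j * (ν j ⬝ᵥ fun s => Y s i)) := by
    intro t Y hY i j
    rw [ha]
    have hcol : (fun r => Xh (t + 1) r i)
        = fun r => (Real.sqrt (∑ r', ((M *ᵥ fun s => Y s i) r') ^ 2))⁻¹
            * (M *ᵥ fun s => Y s i) r := by
      funext r
      rw [hY]
      exact hBNcol Y i r
    rw [hcol]
    have hdot : ∀ (c : ℝ) (v : Fin n → ℝ), (ν j ⬝ᵥ fun r => c * v r) = c * (ν j ⬝ᵥ v) := by
      intro c v
      rw [dotProduct, dotProduct, Finset.mul_sum]
      exact Finset.sum_congr rfl fun r _ => by ring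
    rw [hdot, hproj, hnormsq]
  -- unit-norm of coefficients after a step
  have hunit : ∀ (t : ℕ) (Y : Matrix (Fin n) (Fin k) ℝ), Xh (t + 1) = BN (A * Y) →
      ∀ i : Fin k, (0 < ∑ p, (lam p) ^ 2 * ((ν p ⬝ᵥ fun s => Y s i)) ^ 2) →
      ∑ j, a (t + 1) i j ^ 2 = 1 := by
    intro t Y hY i hpos
    calc ∑ j, a (t + 1) i j ^ 2
        = ∑ j, (Real.sqrt (∑ p, (lam p) ^ 2 * ((ν p ⬝ᵥ fun s => Y s i)) ^ 2))⁻¹ ^ 2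
            * ((lam j) ^ 2 * ((ν j ⬝ᵥ fun s => Y s i)) ^ 2) := by
          refine Finset.sum_congr rfl fun j _ => ?_
          rw [hastep t Y hY i j]
          ring
      _ = (Real.sqrt (∑ p, (lam p) ^ 2 * ((ν p ⬝ᵥ fun s => Y s i)) ^ 2))⁻¹ ^ 2
            * (∑ p, (lam p) ^ 2 * ((ν p ⬝ᵥ fun s => Y s i)) ^ 2) := by
          rw [← Finset.mul_sum]
      _ = 1 := by
          rw [inv_pow, Real.sq_sqrt (le_of_lt hpos)]
          exact inv_mul_cancel₀ (ne_of_gt hpos)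
  obtain ⟨R, hR⟩ : ∃ R : Fin k → ℝ,
      ∀ i, R i = S 1 i / a 1 i (Fin.castLE hkn.le i) ^ 2 := ⟨_, fun _ => rfl⟩
  have hRnn : ∀ i, 0 ≤ R i := by
    intro i
    rw [hR]
    exact div_nonneg (hSnn 1 i) (sq_nonneg _)
  -- the invariant
  have hInv : ∀ t : ℕ, 1 ≤ t → ∀ i : Fin k,
      (∀ j : Fin n, (j : ℕ) < k → j ≠ Fin.castLE hkn.le i → a t i j = 0) ∧
      a t i (Fin.castLE hkn.le i) ≠ 0 ∧
      (∑ j, a t i j ^ 2) = 1 ∧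
      S t i ≤ g ^ (t - 1) * R i * a t i (Fin.castLE hkn.le i) ^ 2 := by
    intro t
    induction t with
    | zero => omega
    | succ t ih =>
      intro _ i
      rcases Nat.eq_zero_or_pos t with rfl | htpos
      · -- base case: step from X0 with weight C⁻¹
        have hY : Xh 1 = BN (A * (X0 * C⁻¹)) := by
          rw [hXhS 0, hXh0]
          have hW0 : Wf 0 = C⁻¹ := if_pos rfl
          rw [hW0, Matrix.mul_assoc]
        have hdotlt : ∀ (j : Fin n) (hj : (j : ℕ) < k),
            (ν j ⬝ᵥ fun s => (X0 * C⁻¹) s i) = if (⟨(j : ℕ), hj⟩ : Fin k) = i then 1 else 0 := by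
          intro j hj
          have hcast : Fin.castLE hkn.le (⟨(j : ℕ), hj⟩ : Fin k) = j := Fin.ext rfl
          have h1 : (ν j ⬝ᵥ fun s => (X0 * C⁻¹) s i)
              = (Vkᵀ * (X0 * C⁻¹)) (⟨(j : ℕ), hj⟩ : Fin k) i := by
            rw [Matrix.mul_apply, dotProduct]
            refine Finset.sum_congr rfl fun s _ => ?_
            rw [Matrix.transpose_apply, hVk, Matrix.of_apply, hcast]
          rw [h1, ← Matrix.mul_assoc, ← hCdef, hCinv, Matrix.one_apply]
        have hicast : (⟨((Fin.castLE hkn.le i : Fin n) : ℕ), by simpa using i.isLt⟩ : Fin k) = i :=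
          Fin.ext rfl
        have hxi : (ν (Fin.castLE hkn.le i) ⬝ᵥ fun s => (X0 * C⁻¹) s i) = 1 := by
          rw [hdotlt (Fin.castLE hkn.le i) (by simpa using i.isLt), if_pos hicast]
        have hpos : 0 < ∑ p, (lam p) ^ 2 * ((ν p ⬝ᵥ fun s => (X0 * C⁻¹) s i)) ^ 2 := by
          have hterm : 0 < (lam (Fin.castLE hkn.le i)) ^ 2
              * ((ν (Fin.castLE hkn.le i) ⬝ᵥ fun s => (X0 * C⁻¹) s i)) ^ 2 := by
            rw [hxi]
            have h1 := hlami i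
            positivity
          exact lt_of_lt_of_le hterm
            (Finset.single_le_sum
              (f := fun p => (lam p) ^ 2 * ((ν p ⬝ᵥ fun s => (X0 * C⁻¹) s i)) ^ 2)
              (fun p _ => by positivity) (Finset.mem_univ _))
        have hcpos : 0 < (Real.sqrt (∑ p, (lam p) ^ 2
            * ((ν p ⬝ᵥ fun s => (X0 * C⁻¹) s i)) ^ 2))⁻¹ :=
          inv_pos.mpr (Real.sqrt_pos.mpr hpos)
        have haj : ∀ j, a 1 i j = (Real.sqrt (∑ p, (lam p) ^ 2
            * ((ν p ⬝ᵥ fun s => (X0 * C⁻¹) s i)) ^ 2))⁻¹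
            * (lam j * (ν j ⬝ᵥ fun s => (X0 * C⁻¹) s i)) := fun j => hastep 0 _ hY i j
        have hne : a 1 i (Fin.castLE hkn.le i) ≠ 0 := by
          rw [haj, hxi, mul_one]
          exact mul_ne_zero (ne_of_gt hcpos) (hlami i)
        refine ⟨?_, hne, hunit 0 _ hY i hpos, ?_⟩
        · intro j hj hjne
          have hneq : (⟨(j : ℕ), hj⟩ : Fin k) ≠ i := by
            intro hji
            apply hjne
            apply Fin.ext
            simpa using congrArg Fin.val hji
          rw [haj j, hdotlt j hj, if_neg hneq, mul_zero, mul_zero]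
        · rw [pow_zero, one_mul, hR, div_mul_cancel₀ _ (pow_ne_zero 2 hne)]
      · -- inductive step with identity weights
        obtain ⟨ihz, ihne, ihsum, ihS⟩ := ih htpos i
        have hY : Xh (t + 1) = BN (A * Xh t) := by
          rw [hXhS t]
          have hW : Wf t = 1 := if_neg (by omega)
          rw [hW, Matrix.mul_one]
        have hN2pos : 0 < ∑ p, (lam p) ^ 2 * (a t i p) ^ 2 := by
          have hterm : 0 < (lam (Fin.castLE hkn.le i)) ^ 2
              * (a t i (Fin.castLE hkn.le i)) ^ 2 := by
            have h1 := hlami i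
            positivity
          exact lt_of_lt_of_le hterm
            (Finset.single_le_sum (f := fun p => (lam p) ^ 2 * (a t i p) ^ 2)
              (fun p _ => by positivity) (Finset.mem_univ _))
        have hpos' : 0 < ∑ p, (lam p) ^ 2 * ((ν p ⬝ᵥ fun s => Xh t s i)) ^ 2 := by
          simpa only [← ha] using hN2pos
        obtain ⟨cc, hcc⟩ : ∃ cc : ℝ,
            cc = (Real.sqrt (∑ p, (lam p) ^ 2 * (a t i p) ^ 2))⁻¹ := ⟨_, rfl⟩
        have hccpos : 0 < cc := by
          rw [hcc]
          exact inv_pos.mpr (Real.sqrt_pos.mpr hN2pos)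
        have haj : ∀ j, a (t + 1) i j = cc * (lam j * a t i j) := by
          intro j
          have h0 := hastep t (Xh t) hY i j
          simp only [← ha] at h0
          rw [h0, hcc]
        have hne : a (t + 1) i (Fin.castLE hkn.le i) ≠ 0 := by
          rw [haj]
          exact mul_ne_zero (ne_of_gt hccpos) (mul_ne_zero (hlami i) ihne)
        refine ⟨?_, hne, hunit t _ hY i hpos', ?_⟩
        · intro j hj hjne
          rw [haj j, ihz j hj hjne, mul_zero, mul_zero]
        · have hX0nn : (0 : ℝ) ≤ g ^ (t - 1) * R i * a t i (Fin.castLE hkn.le i) ^ 2 :=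
            mul_nonneg (mul_nonneg (pow_nonneg hg0 _) (hRnn i)) (sq_nonneg _)
          have h0 : (0 : ℝ) ≤ cc ^ 2 * (g ^ (t - 1) * R i * a t i (Fin.castLE hkn.le i) ^ 2) :=
            mul_nonneg (sq_nonneg _) hX0nn
          calc S (t + 1) i
              = ∑ j ∈ Finset.univ.filter (fun j : Fin n => k ≤ (j : ℕ)),
                  (cc * (lam j * a t i j)) ^ 2 := by
                rw [hS]
                exact Finset.sum_congr rfl fun j _ => by rw [haj j]
            _ = ∑ j ∈ Finset.univ.filter (fun j : Fin n => k ≤ (j : ℕ)),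
                  cc ^ 2 * ((lam j) ^ 2 * (a t i j) ^ 2) := by
                exact Finset.sum_congr rfl fun j _ => by ring
            _ ≤ ∑ j ∈ Finset.univ.filter (fun j : Fin n => k ≤ (j : ℕ)),
                  cc ^ 2 * ((lam K) ^ 2 * (a t i j) ^ 2) := by
                refine Finset.sum_le_sum fun j hj => ?_
                have hjk : k ≤ (j : ℕ) := (Finset.mem_filter.mp hj).2
                have hlj : (lam j) ^ 2 ≤ (lam K) ^ 2 := by
                  have := pow_le_pow_left₀ (abs_nonneg _) (hordK j hjk) 2
                  simpa [sq_abs] using this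
                exact mul_le_mul_of_nonneg_left
                  (mul_le_mul_of_nonneg_right hlj (sq_nonneg _)) (sq_nonneg cc)
            _ = cc ^ 2 * (lam K) ^ 2 * S t i := by
                rw [hS t i, Finset.mul_sum]
                exact Finset.sum_congr rfl fun j _ => by ring
            _ ≤ cc ^ 2 * (lam K) ^ 2 * (g ^ (t - 1) * R i * a t i (Fin.castLE hkn.le i) ^ 2) :=
                mul_le_mul_of_nonneg_left ihS (by positivity)
            _ = (cc ^ 2 * (g ^ (t - 1) * R i * a t i (Fin.castLE hkn.le i) ^ 2)) * (lam K) ^ 2 := by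
                ring
            _ ≤ (cc ^ 2 * (g ^ (t - 1) * R i * a t i (Fin.castLE hkn.le i) ^ 2))
                  * (g * (lam (Fin.castLE hkn.le i)) ^ 2) :=
                mul_le_mul_of_nonneg_left (hKg i) h0
            _ = g ^ (t + 1 - 1) * R i * a (t + 1) i (Fin.castLE hkn.le i) ^ 2 := by
                have hgp : g ^ (t + 1 - 1) = g ^ (t - 1) * g := by
                  have h5 : t + 1 - 1 = (t - 1) + 1 := by omega
                  rw [h5, pow_succ]
                rw [haj (Fin.castLE hkn.le i), hgp]
                ring
  -- choose T
  haveI : Nonempty (Fin k) := ⟨⟨0, hk⟩⟩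
  set R' : ℝ := Finset.univ.sup' Finset.univ_nonempty R with hR'def
  obtain ⟨m, hm⟩ : ∃ m : ℕ, g ^ m * R' ≤ ε := by
    rcases le_or_gt R' 0 with h | h
    · exact ⟨0, by nlinarith⟩
    · obtain ⟨m, hm⟩ := exists_pow_lt_of_lt_one (div_pos hε h) hg1
      exact ⟨m, le_of_lt ((lt_div_iff₀ h).mp hm)⟩
  refine ⟨m + 1, Wf, fun t ht => if_neg (by omega), ?_⟩
  intro X hX0' hXrec t ht i
  have hXeq : ∀ s, X s = Xh s := by
    intro s
    induction s with
    | zero => rw [hX0', hXh0]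
    | succ s ih => rw [hXrec, ih, hXhS]
  rw [hXeq]
  have h1t : 1 ≤ t := by omega
  obtain ⟨hzero, hne, hsum1, hSb⟩ := hInv t h1t i
  rw [← ha]
  -- split the full sum
  have hsplit : a t i (Fin.castLE hkn.le i) ^ 2 + S t i = 1 := by
    have hhead : ∑ j ∈ Finset.univ.filter (fun j : Fin n => ¬ k ≤ (j : ℕ)), a t i j ^ 2
        = a t i (Fin.castLE hkn.le i) ^ 2 := by
      apply Finset.sum_eq_single_of_mem
      · simp only [Finset.mem_filter, Finset.mem_univ, true_and, not_le, Fin.coe_castLE]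
        exact i.isLt
      · intro j hj hjne
        have hj' : (j : ℕ) < k := by
          have := (Finset.mem_filter.mp hj).2
          omega
        rw [hzero j hj' hjne]
        ring
    have htot := hsum1
    rw [← Finset.sum_filter_add_sum_filter_not Finset.univ (fun j : Fin n => k ≤ (j : ℕ))
      (fun j => a t i j ^ 2)] at htot
    rw [hS, ← hhead]
    linarith
  have hSe : S t i ≤ ε * a t i (Fin.castLE hkn.le i) ^ 2 := by
    have h1 : g ^ (t - 1) ≤ g ^ m := pow_le_pow_of_le_one hg0 (le_of_lt hg1) (by omega)
    have hle : R i ≤ R' := Finset.le_sup' R (Finset.mem_univ i)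
    have h3 : g ^ (t - 1) * R i ≤ g ^ m * R i := mul_le_mul_of_nonneg_right h1 (hRnn i)
    have h4 : g ^ m * R i ≤ g ^ m * R' := mul_le_mul_of_nonneg_left hle (pow_nonneg hg0 m)
    calc S t i ≤ g ^ (t - 1) * R i * a t i (Fin.castLE hkn.le i) ^ 2 := hSb
      _ ≤ (g ^ m * R') * a t i (Fin.castLE hkn.le i) ^ 2 :=
          mul_le_mul_of_nonneg_right (by linarith) (sq_nonneg _)
      _ ≤ ε * a t i (Fin.castLE hkn.le i) ^ 2 :=
          mul_le_mul_of_nonneg_right hm (sq_nonneg _)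
  have h1e : (0 : ℝ) < 1 + ε := by linarith
  have hd2 : 0 ≤ a t i (Fin.castLE hkn.le i) ^ 2 := sq_nonneg _
  have hdge : 1 / (1 + ε) ≤ a t i (Fin.castLE hkn.le i) ^ 2 := by
    rw [div_le_iff₀ h1e]
    nlinarith [hSnn t i]
  calc 1 / Real.sqrt (1 + ε) = Real.sqrt (1 / (1 + ε)) := by
        rw [one_div, one_div, Real.sqrt_inv]
    _ ≤ Real.sqrt (a t i (Fin.castLE hkn.le i) ^ 2) := Real.sqrt_le_sqrt hdge
    _ = |a t i (Fin.castLE hkn.le i)| := Real.sqrt_sq_eq_abs _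
end

section
/- Fix τ ≠ 0. Suppose ν₁^π, …, ν_m^π are eigenvectors of A^π such that H·ν₁^π, …, H·ν_m^π are nonzero and pairwise orthogonal. Then every eigenpair (λ, φ) of A whose eigenvector φ is orthogonal to H·ν_i^π for all i ∈ {1,…,m} satisfies φᵀ·1_n = 0, and (λ, φ) is also an eigenpair of the centered operator: (I_n − τ·1·1ᵀ/n)·A·φ = λ·φ. -/
open Matrix

/-!
Nonzero pairwise orthogonal vectors `H νᵢ^π` are linearly independent, hence so are the `m`
vectors `νᵢ^π`, which therefore span `ℝ^m`. Since every row of `H` sums to one,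
`1_n = H 1_m` lies in the span of the `H νᵢ^π`, so an eigenvector `φ` orthogonal to all of them
is orthogonal to `1_n`. Then `11ᵀ A φ = λ 11ᵀ φ = 0`, and the centering term vanishes.
-/

namespace Matrix

variable {ι n m R : Type*}

theorem linearIndependent_of_ne_zero_of_dotProduct_eq_zero [Field R] [LinearOrder R]
    [IsStrictOrderedRing R] [Fintype ι] [Fintype n] {v : ι → n → R} (hz : ∀ i, v i ≠ 0)
    (hv : Pairwise fun i j => v i ⬝ᵥ v j = 0) : LinearIndependent R v := by
  rw [Fintype.linearIndependent_iff]
  intro g hg j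
  have hsum : (∑ i, g i • v i) ⬝ᵥ v j = g j * (v j ⬝ᵥ v j) := by
    rw [sum_dotProduct, Finset.sum_eq_single j (fun i _ hij => by rw [smul_dotProduct, hv hij,
      smul_zero]) (by simp), smul_dotProduct, smul_eq_mul]
  rw [hg, zero_dotProduct] at hsum
  exact (mul_eq_zero.mp hsum.symm).resolve_right (mt dotProduct_self_eq_zero.mp (hz j))

theorem dotProduct_eq_zero_of_mem_span [CommSemiring R] [Fintype n] {v : ι → n → R} {φ w : n → R}
    (hφ : ∀ i, φ ⬝ᵥ v i = 0) (hw : w ∈ Submodule.span R (Set.range v)) : φ ⬝ᵥ w = 0 := by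
  have hle : Submodule.span R (Set.range v) ≤ LinearMap.ker (dotProductBilin R R φ) :=
    Submodule.span_le.mpr (Set.range_subset_iff.mpr hφ)
  exact hle hw

theorem mulVec_mem_span_range_mulVec [Field R] [Fintype m] (H : Matrix n m R)
    {v : m → m → R} (hv : LinearIndependent R fun i => H *ᵥ v i) (x : m → R) :
    H *ᵥ x ∈ Submodule.span R (Set.range fun i => H *ᵥ v i) := by
  have hspan : Submodule.span R (Set.range v) = ⊤ :=
    (hv.of_comp H.mulVecLin).span_eq_top_of_card_eq_finrank' (by simp)
  have hrange : (Set.range fun i => H *ᵥ v i) = H.mulVecLin '' Set.range v := by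
    rw [← Set.range_comp]; rfl
  rw [hrange, Submodule.span_image, hspan]
  exact Submodule.mem_map_of_mem trivial

theorem mulVec_one_of_sum_row_eq_one [NonAssocSemiring R] [Fintype m] {H : Matrix n m R}
    (hrow : ∀ i, ∑ j, H i j = 1) : H *ᵥ 1 = 1 := by
  ext i
  simpa [mulVec, dotProduct] using hrow i

theorem centered_mulVec_eq_of_sum_eq_zero [CommRing R] [Fintype n] [DecidableEq n] (A : Matrix n n R)
    (c μ : R) {φ : n → R} (hφ : A *ᵥ φ = μ • φ) (hsum : ∑ i, φ i = 0) :
    ((1 - c • of fun _ _ => (1 : R)) * A) *ᵥ φ = μ • φ := by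
  have hJ : (of fun _ _ => (1 : R) : Matrix n n R) *ᵥ φ = 0 := by
    ext i
    simpa [mulVec, dotProduct] using hsum
  rw [sub_mul, one_mul, sub_mulVec, smul_mul, smul_mulVec, ← mulVec_mulVec, hφ, mulVec_smul,
    hJ, smul_zero, smul_zero, sub_zero]

end Matrix

theorem stmt_13_general {n m : ℕ}
    (A : Matrix (Fin n) (Fin n) ℝ)
    (H : Matrix (Fin n) (Fin m) ℝ)
    (hrow : ∀ i, ∑ j, H i j = 1)           -- each row has exactly one entry `1`
    (τ : ℝ)
    (νπ : Fin m → Fin m → ℝ)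
    (hnz : ∀ i, H *ᵥ νπ i ≠ 0)
    (horth : ∀ i j, i ≠ j → (H *ᵥ νπ i) ⬝ᵥ (H *ᵥ νπ j) = 0) :
    ∀ (lam : ℝ) (φ : Fin n → ℝ), φ ≠ 0 →
      A *ᵥ φ = lam • φ →
      (∀ i, φ ⬝ᵥ (H *ᵥ νπ i) = 0) →
      (∑ i, φ i = 0) ∧
      (((1 : Matrix (Fin n) (Fin n) ℝ) - (τ / n) • Matrix.of fun _ _ => (1 : ℝ)) * A) *ᵥ φ
        = lam • φ := by
  intro lam φ _ hAφ hperp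
  have hli : LinearIndependent ℝ fun i => H *ᵥ νπ i :=
    linearIndependent_of_ne_zero_of_dotProduct_eq_zero hnz fun _ _ => horth _ _
  have hone_mem : (1 : Fin n → ℝ) ∈ Submodule.span ℝ (Set.range fun i => H *ᵥ νπ i) :=
    mulVec_one_of_sum_row_eq_one hrow ▸ mulVec_mem_span_range_mulVec H hli 1
  have hsum : ∑ i, φ i = 0 := by
    rw [← dotProduct_one]
    exact dotProduct_eq_zero_of_mem_span hperp hone_mem
  exact ⟨hsum, centered_mulVec_eq_of_sum_eq_zero A _ lam hAφ hsum⟩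

/-- Let `A` be symmetric nonnegative, `H` the indicator matrix of an
equitable partition (`A·H = H·Aπ` with `Aπ = (HᵀH)⁻¹·Hᵀ·A·H`) and `τ ≠ 0`. If
`ν₁^π, …, ν_m^π` are eigenvectors of `Aπ` with `H·ν_i^π` nonzero and pairwise orthogonal,
then every eigenpair `(λ, φ)` of `A` with `φ ⟂ H·ν_i^π` for all `i` satisfies `φᵀ·1 = 0` and
`(I − τ·11ᵀ/n)·A·φ = λ·φ`. -/
theorem stmt_13 {n m : ℕ}
    (A : Matrix (Fin n) (Fin n) ℝ) (hA : A.IsSymm) (hAnn : ∀ i j, 0 ≤ A i j)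
    (H : Matrix (Fin n) (Fin m) ℝ)
    (h01 : ∀ i j, H i j = 0 ∨ H i j = 1)
    (hrow : ∀ i, ∑ j, H i j = 1)           -- each row has exactly one entry `1`
    (hcls : ∀ j, ∃ i, H i j = 1)           -- each class is nonempty
    (Aπ : Matrix (Fin m) (Fin m) ℝ)
    (hAπ : Aπ = (Hᵀ * H)⁻¹ * Hᵀ * A * H)
    (hEP : A * H = H * Aπ)                  -- equitable partition
    (τ : ℝ) (hτ : τ ≠ 0)
    (νπ : Fin m → Fin m → ℝ)
    (heigπ : ∀ i, ∃ μ : ℝ, Aπ *ᵥ νπ i = μ • νπ i)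
    (hnz : ∀ i, H *ᵥ νπ i ≠ 0)
    (horth : ∀ i j, i ≠ j → (H *ᵥ νπ i) ⬝ᵥ (H *ᵥ νπ j) = 0) :
    ∀ (lam : ℝ) (φ : Fin n → ℝ), φ ≠ 0 →
      A *ᵥ φ = lam • φ →
      (∀ i, φ ⬝ᵥ (H *ᵥ νπ i) = 0) →
      (∑ i, φ i = 0) ∧
      (((1 : Matrix (Fin n) (Fin n) ℝ) - (τ / n) • Matrix.of fun _ _ => (1 : ℝ)) * A) *ᵥ φ
        = lam • φ :=
  stmt_13_general A H hrow τ νπ hnz horth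
end

section
/- Let τ > 0. Let (λ, ν) be an eigenpair of A with λ ≠ 0, ν entrywise nonnegative and nonzero, and ν not a constant vector (there exist indices i, j with ν_i ≠ ν_j). Then ν is not an eigenvector of (I_n − τ·1·1ᵀ/n)·A: for every λ̂ ∈ ℝ, (I_n − τ·1·1ᵀ/n)·A·ν ≠ λ̂·ν. -/
/-!
Write `J` for the all-ones matrix and `s = ∑ i, ν i`. From `A ν = λ ν` we get
`(I - (τ/n) J) A ν = λ ν - (τ λ s / n) 𝟙`, and `τ λ s / n ≠ 0` because `ν ≥ 0, ν ≠ 0` forces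
`s > 0`. So `(I - (τ/n) J) A ν = λ̂ ν` would give `(λ - λ̂) ν = (τ λ s / n) 𝟙` with a nonzero
right-hand side, making `ν` constant.
-/

open Matrix

section

variable {m ι R : Type*}

theorem Matrix.of_const_one_mulVec [Fintype ι] [NonAssocSemiring R] (v : ι → R) :
    (of fun (_ : m) (_ : ι) => (1 : R)) *ᵥ v = fun _ => ∑ i, v i := by
  ext
  simp [mulVec, dotProduct]

theorem Matrix.centered_mul_mulVec_of_mulVec_eq_smul [Fintype ι] [DecidableEq ι] [CommRing R]
    {A : Matrix ι ι R} {v : ι → R} {lam : R} (c : R) (h : A *ᵥ v = lam • v) :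
    ((1 - c • of fun _ _ => (1 : R)) * A) *ᵥ v = lam • v - fun _ => c * (lam * ∑ i, v i) := by
  rw [← mulVec_mulVec, h, sub_mulVec, one_mulVec, smul_mulVec, mulVec_smul,
    of_const_one_mulVec]
  ext
  simp [Finset.mul_sum]

theorem apply_eq_apply_of_smul_sub_const_eq_smul [CommRing R] [IsDomain R] {v : ι → R}
    {lam mu a : R} (ha : a ≠ 0) (h : lam • v - (fun _ => a) = mu • v) (i j : ι) :
    v i = v j := by
  have hv : ∀ k, (lam - mu) * v k = a := fun k => by
    have hk := congrFun h k
    simp only [Pi.sub_apply, Pi.smul_apply, smul_eq_mul] at hk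
    linear_combination hk
  have hd : lam - mu ≠ 0 := fun hd => ha (by rw [← hv i, hd, zero_mul])
  exact mul_left_cancel₀ hd ((hv i).trans (hv j).symm)

end

theorem stmt_15_general {n : ℕ}
    (A : Matrix (Fin n) (Fin n) ℝ)
    (τ : ℝ) (hτ : 0 < τ)
    (lam : ℝ) (hlam : lam ≠ 0)
    (ν : Fin n → ℝ)
    (heig : A *ᵥ ν = lam • ν)
    (hν_nonneg : ∀ i, 0 ≤ ν i) (hν_ne : ν ≠ 0)
    (hν_nonconst : ∃ i j : Fin n, ν i ≠ ν j) :
    ∀ lamHat : ℝ,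
      (((1 : Matrix (Fin n) (Fin n) ℝ) - (τ / n) • Matrix.of fun _ _ => (1 : ℝ)) * A) *ᵥ ν
        ≠ lamHat • ν := by
  intro lamHat h
  obtain ⟨i, j, hij⟩ := hν_nonconst
  have hn : (n : ℝ) ≠ 0 := Nat.cast_ne_zero.mpr i.pos.ne'
  have hsum : 0 < ∑ k, ν k := Fintype.sum_pos (lt_of_le_of_ne hν_nonneg hν_ne.symm)
  rw [centered_mul_mulVec_of_mulVec_eq_smul _ heig] at h
  exact hij (apply_eq_apply_of_smul_sub_const_eq_smul
    (mul_ne_zero (div_ne_zero hτ.ne' hn) (mul_ne_zero hlam hsum.ne')) h i j)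

/-- Let `A` be symmetric nonnegative and `τ > 0`. If `(λ, ν)` is an
eigenpair of `A` with `λ ≠ 0`, `ν` entrywise nonnegative, nonzero and non-constant, then `ν`
is not an eigenvector of the centered operator `(I − τ·11ᵀ/n)·A`. -/
theorem stmt_15 {n : ℕ}
    (A : Matrix (Fin n) (Fin n) ℝ) (hA : A.IsSymm) (hAnn : ∀ i j, 0 ≤ A i j)
    (τ : ℝ) (hτ : 0 < τ)
    (lam : ℝ) (hlam : lam ≠ 0)
    (ν : Fin n → ℝ)
    (heig : A *ᵥ ν = lam • ν)
    (hν_nonneg : ∀ i, 0 ≤ ν i) (hν_ne : ν ≠ 0)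
    (hν_nonconst : ∃ i j : Fin n, ν i ≠ ν j) :
    ∀ lamHat : ℝ,
      (((1 : Matrix (Fin n) (Fin n) ℝ) - (τ / n) • Matrix.of fun _ _ => (1 : ℝ)) * A) *ᵥ ν
        ≠ lamHat • ν :=
  stmt_15_general A τ hτ lam hlam ν heig hν_nonneg hν_ne hν_nonconst
end

section
/- Let τ > 0 and suppose 1ᵀ·A·1 > 0. Let P := H·(HᵀH)^{−1}·Hᵀ be the orthogonal projection onto the column space of H. Then the column space of H is an invariant subspace of both A and (I_n − τ·1·1ᵀ/n)·A, and Tr(P·A·P) − Tr(P·(I_n − τ·1·1ᵀ/n)·A·P) = τ·(1ᵀ·A·1)/n > 0; i.e., the sum of the eigenvalues of the centered operator on this invariant subspace is strictly smaller than the sum of the corresponding (structural) eigenvalues of A. -/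
/-!
On `col(H)` the projection `P` acts as the identity, and `col(H)` contains the all-ones
vector because every row of `H` sums to `1`; hence `P·J = J` for the all-ones matrix `J`.
The two traces differ by `(τ/n)·Tr(P·J·A·P) = (τ/n)·Tr(J·A) = τ·(1ᵀ·A·1)/n`.
Invariance of `col(H)` under `A` is the equitable-partition identity `A·H = H·Aπ`, and under
`J·A` it follows from `J = H·J'` with `J'` the all-ones `m × n` matrix.
-/

open Matrix Finset

namespace Matrix

variable {ι κ ν R : Type*}

lemma exists_mulVec_eq_of_mul_eq [Fintype ι] [Fintype κ] [CommSemiring R] {M : Matrix ι ι R}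
    {H : Matrix ι κ R} {B : Matrix κ κ R} (hMH : M * H = H * B) (x : κ → R) :
    ∃ y, M *ᵥ (H *ᵥ x) = H *ᵥ y :=
  ⟨B *ᵥ x, by rw [mulVec_mulVec, hMH, ← mulVec_mulVec]⟩

lemma mul_of_one_eq_of_one [Fintype κ] [NonAssocSemiring R] {H : Matrix ι κ R}
    (hrow : ∀ i, ∑ j, H i j = 1) :
    H * (of fun _ _ => 1 : Matrix κ ν R) = of fun _ _ => 1 := by
  ext i k
  simp only [mul_apply, of_apply, mul_one, hrow]

lemma trace_of_one_mul [Fintype ι] [CommSemiring R] (A : Matrix ι ι R) :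
    trace ((of fun _ _ => 1 : Matrix ι ι R) * A) = (fun _ => 1) ⬝ᵥ (A *ᵥ fun _ => 1) := by
  simp only [trace, diag, mul_apply, of_apply, one_mul, dotProduct, mulVec, mul_one]
  exact sum_comm

lemma mul_inv_transpose_mul_self_mul_transpose_mul_cancel [Fintype ι] [Fintype κ] [CommRing R]
    [DecidableEq κ] {H : Matrix ι κ R} (h : IsUnit (Hᵀ * H).det) :
    H * (Hᵀ * H)⁻¹ * Hᵀ * H = H := by
  rw [Matrix.mul_assoc, Matrix.mul_assoc, nonsing_inv_mul _ h, Matrix.mul_one]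

lemma trace_mul_mul_of_mul_self_eq [Fintype ι] [CommSemiring R] {P : Matrix ι ι R}
    (hPP : P * P = P) (M : Matrix ι ι R) : trace (P * M * P) = trace (P * M) := by
  rw [trace_mul_comm, ← Matrix.mul_assoc, hPP]

lemma trace_mul_mul_sub_trace_centered [Fintype ι] [CommRing R] [DecidableEq ι]
    {P J : Matrix ι ι R} (hPP : P * P = P) (hPJ : P * J = J) (A : Matrix ι ι R) (c : R) :
    trace (P * A * P) - trace (P * ((1 - c • J) * A) * P) = c * trace (J * A) := by
  rw [← trace_sub, ← Matrix.sub_mul, ← Matrix.mul_sub, Matrix.sub_mul, Matrix.one_mul,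
    sub_sub_cancel, Matrix.smul_mul, Matrix.mul_smul, Matrix.smul_mul, trace_smul,
    trace_mul_mul_of_mul_self_eq hPP, ← Matrix.mul_assoc, hPJ, smul_eq_mul]

section PartitionIndicator

variable [Fintype κ] [DecidableEq κ] {H : Matrix ι κ ℝ}

lemma mul_eq_zero_of_partitionIndicator (h01 : ∀ i j, H i j = 0 ∨ H i j = 1)
    (hrow : ∀ i, ∑ j, H i j = 1) (i : ι) {j k : κ} (hjk : j ≠ k) : H i j * H i k = 0 := by
  rcases h01 i j with hj | hj
  · simp [hj]
  rcases h01 i k with hk | hk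
  · simp [hk]
  -- both entries equal to `1` would make the row sum at least `2`
  have hle : ∑ l ∈ {j, k}, H i l ≤ ∑ l, H i l :=
    sum_le_sum_of_subset_of_nonneg (subset_univ _) fun l _ _ => by
      rcases h01 i l with h | h <;> simp [h]
  rw [sum_pair hjk, hj, hk, hrow i] at hle
  norm_num at hle

lemma transpose_mul_self_eq_diagonal_of_partitionIndicator [Fintype ι]
    (h01 : ∀ i j, H i j = 0 ∨ H i j = 1) (hrow : ∀ i, ∑ j, H i j = 1) :
    Hᵀ * H = diagonal fun j => ∑ i, H i j := by
  ext j k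
  rw [mul_apply, diagonal_apply]
  split_ifs with hjk
  · subst hjk
    exact sum_congr rfl fun i _ => by rcases h01 i j with h | h <;> simp [h]
  · exact sum_eq_zero fun i _ => mul_eq_zero_of_partitionIndicator h01 hrow i hjk

lemma isUnit_det_transpose_mul_self_of_partitionIndicator [Fintype ι]
    (h01 : ∀ i j, H i j = 0 ∨ H i j = 1) (hrow : ∀ i, ∑ j, H i j = 1)
    (hcls : ∀ j, ∃ i, H i j = 1) : IsUnit (Hᵀ * H).det := by
  rw [transpose_mul_self_eq_diagonal_of_partitionIndicator h01 hrow, det_diagonal]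
  refine (prod_pos fun j _ => ?_).ne'.isUnit
  obtain ⟨i₀, hi₀⟩ := hcls j
  exact sum_pos' (fun i _ => by rcases h01 i j with h | h <;> simp [h])
    ⟨i₀, mem_univ _, by simp [hi₀]⟩

end PartitionIndicator

end Matrix

theorem stmt_16_general {n m : ℕ}
    (A : Matrix (Fin n) (Fin n) ℝ)
    (H : Matrix (Fin n) (Fin m) ℝ)
    (h01 : ∀ i j, H i j = 0 ∨ H i j = 1)
    (hrow : ∀ i, ∑ j, H i j = 1)           -- each row has exactly one entry `1`
    (hcls : ∀ j, ∃ i, H i j = 1)           -- each class is nonempty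
    (Aπ : Matrix (Fin m) (Fin m) ℝ)
    (hEP : A * H = H * Aπ)                  -- equitable partition
    (τ : ℝ) (hτ : 0 < τ)
    (hA1 : 0 < (fun _ => (1 : ℝ)) ⬝ᵥ (A *ᵥ fun _ => (1 : ℝ)))
    (P : Matrix (Fin n) (Fin n) ℝ)
    (hP : P = H * (Hᵀ * H)⁻¹ * Hᵀ)
    (Mc : Matrix (Fin n) (Fin n) ℝ)
    (hMc : Mc = ((1 : Matrix (Fin n) (Fin n) ℝ) - (τ / n) • Matrix.of fun _ _ => (1 : ℝ)) * A) :
    (∀ x : Fin m → ℝ, ∃ y : Fin m → ℝ, A *ᵥ (H *ᵥ x) = H *ᵥ y) ∧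
    (∀ x : Fin m → ℝ, ∃ y : Fin m → ℝ, Mc *ᵥ (H *ᵥ x) = H *ᵥ y) ∧
    Matrix.trace (P * A * P) - Matrix.trace (P * Mc * P)
      = τ * ((fun _ => (1 : ℝ)) ⬝ᵥ (A *ᵥ fun _ => (1 : ℝ))) / n ∧
    0 < τ * ((fun _ => (1 : ℝ)) ⬝ᵥ (A *ᵥ fun _ => (1 : ℝ))) / n := by
  set J : Matrix (Fin n) (Fin n) ℝ := of fun _ _ => 1
  set J' : Matrix (Fin m) (Fin n) ℝ := of fun _ _ => 1
  have hJ : J = H * J' := (mul_of_one_eq_of_one hrow).symm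
  have hPH : P * H = H := hP ▸ mul_inv_transpose_mul_self_mul_transpose_mul_cancel
    (isUnit_det_transpose_mul_self_of_partitionIndicator h01 hrow hcls)
  have hPP : P * P = P := by
    nth_rw 2 [hP]
    rw [← Matrix.mul_assoc, ← Matrix.mul_assoc, hPH, hP]
  have hPJ : P * J = J := by rw [hJ, ← Matrix.mul_assoc, hPH]
  have hMcH : Mc * H = H * (Aπ - (τ / n) • (J' * A * H)) := by
    rw [hMc, Matrix.sub_mul, Matrix.one_mul, Matrix.smul_mul, Matrix.sub_mul, Matrix.smul_mul,
      hJ, Matrix.mul_sub, Matrix.mul_smul, hEP, Matrix.mul_assoc, Matrix.mul_assoc,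
      Matrix.mul_assoc]
  have hn : (0 : ℝ) < n := Nat.cast_pos.mpr <| Nat.pos_of_ne_zero <| by
    rintro rfl
    simp at hA1
  refine ⟨exists_mulVec_eq_of_mul_eq hEP, exists_mulVec_eq_of_mul_eq hMcH, ?_,
    by positivity⟩
  rw [hMc, trace_mul_mul_sub_trace_centered hPP hPJ, trace_of_one_mul]
  ring

/-- Let `A` be symmetric nonnegative, `H` the indicator matrix of an
equitable partition (`A·H = H·Aπ`), `τ > 0` and `1ᵀ·A·1 > 0`. With
`P := H·(HᵀH)⁻¹·Hᵀ` the orthogonal projection onto `col(H)`, the column space of `H` is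
invariant under both `A` and the centered operator `(I − τ·11ᵀ/n)·A`, and
`Tr(P·A·P) − Tr(P·(I − τ·11ᵀ/n)·A·P) = τ·(1ᵀ·A·1)/n > 0`. -/
theorem stmt_16 {n m : ℕ}
    (A : Matrix (Fin n) (Fin n) ℝ) (hA : A.IsSymm) (hAnn : ∀ i j, 0 ≤ A i j)
    (H : Matrix (Fin n) (Fin m) ℝ)
    (h01 : ∀ i j, H i j = 0 ∨ H i j = 1)
    (hrow : ∀ i, ∑ j, H i j = 1)           -- each row has exactly one entry `1`
    (hcls : ∀ j, ∃ i, H i j = 1)           -- each class is nonempty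
    (Aπ : Matrix (Fin m) (Fin m) ℝ)
    (hAπ : Aπ = (Hᵀ * H)⁻¹ * Hᵀ * A * H)
    (hEP : A * H = H * Aπ)                  -- equitable partition
    (τ : ℝ) (hτ : 0 < τ)
    (hA1 : 0 < (fun _ => (1 : ℝ)) ⬝ᵥ (A *ᵥ fun _ => (1 : ℝ)))
    (P : Matrix (Fin n) (Fin n) ℝ)
    (hP : P = H * (Hᵀ * H)⁻¹ * Hᵀ)
    (Mc : Matrix (Fin n) (Fin n) ℝ)
    (hMc : Mc = ((1 : Matrix (Fin n) (Fin n) ℝ) - (τ / n) • Matrix.of fun _ _ => (1 : ℝ)) * A) :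
    (∀ x : Fin m → ℝ, ∃ y : Fin m → ℝ, A *ᵥ (H *ᵥ x) = H *ᵥ y) ∧
    (∀ x : Fin m → ℝ, ∃ y : Fin m → ℝ, Mc *ᵥ (H *ᵥ x) = H *ᵥ y) ∧
    Matrix.trace (P * A * P) - Matrix.trace (P * Mc * P)
      = τ * ((fun _ => (1 : ℝ)) ⬝ᵥ (A *ᵥ fun _ => (1 : ℝ))) / n ∧
    0 < τ * ((fun _ => (1 : ℝ)) ⬝ᵥ (A *ᵥ fun _ => (1 : ℝ))) / n :=
  stmt_16_general A H h01 hrow hcls Aπ hEP τ hτ hA1 P hP Mc hMc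
end

section
/- Let G be a connected graph on n nodes with adjacency matrix A_adj and degree matrix D = diag(A_adj·1), all degrees positive, and define the graph Dirichlet energy E(X) := (1/2)·Σ over edges (i,j) of ‖X_{i,:}/√d_i − X_{j,:}/√d_j‖₂². Let v := D^{1/2}·1/‖D^{1/2}·1‖₂. Then there exist constants C₁, C₂ > 0 such that for all X ∈ ℝ^{n×k}: C₁·μ_v(X) ≤ E(X) ≤ C₂·μ_v(X). -/
/-!
Column by column, `E` is the quadratic form `y ↦ ½ aᵀ L a` with `a = D^{-1/2} y` and `L` the
graph Laplacian. It is unchanged by adding multiples of `D^{1/2}·1`, and on a connected graph it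
vanishes only on that line, while `μ_v` is the sum of the squared norms of the projections of the
columns onto its orthogonal complement. On that complement the form is positive definite, so
compactness of the unit sphere bounds it below by `c‖y‖²`; it is bounded above by `‖y‖²` because
`(a - b)² ≤ 2a² + 2b²`.
-/

open Matrix

/-- `μ_v(X) = ‖X − v·vᵀ·X‖_F²`. -/
noncomputable def muV {n k : ℕ} (v : Fin n → ℝ) (X : Matrix (Fin n) (Fin k) ℝ) : ℝ :=
  ∑ r, ∑ j, ((X - (Matrix.of fun a b => v a * v b) * X) r j) ^ 2

/-- Graph Dirichlet energy `E(X) = (1/2)·Σ_{edges (i,j)} ‖X_{i,:}/√d_i − X_{j,:}/√d_j‖₂²`.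
Each undirected edge appears twice in the double sum over ordered adjacent pairs, whence the
factor `1/4`. -/
noncomputable def dirichletEnergy {n k : ℕ} (G : SimpleGraph (Fin n)) [DecidableRel G.Adj]
    (X : Matrix (Fin n) (Fin k) ℝ) : ℝ :=
  (1 / 4) * ∑ i, ∑ j,
    if G.Adj i j then
      ∑ c, (X i c / Real.sqrt (G.degree i) - X j c / Real.sqrt (G.degree j)) ^ 2
    else 0

theorem exists_pos_mul_norm_sq_le {E : Type*} [NormedAddCommGroup E] [NormedSpace ℝ E]
    [FiniteDimensional ℝ E] {q : E → ℝ} (hq : Continuous q)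
    (hsmul : ∀ (t : ℝ) (x : E), q (t • x) = t ^ 2 * q x) (hpos : ∀ x ≠ 0, 0 < q x) :
    ∃ c > 0, ∀ x, c * ‖x‖ ^ 2 ≤ q x := by
  have hq0 : q 0 = 0 := by simpa using hsmul 0 0
  rcases subsingleton_or_nontrivial E with hE | hE
  · exact ⟨1, one_pos, fun x => by simp [Subsingleton.elim x 0, hq0]⟩
  obtain ⟨x₀, hx₀, hmin⟩ := (isCompact_sphere (0 : E) 1).exists_isMinOn
    (NormedSpace.sphere_nonempty.2 zero_le_one) hq.continuousOn
  refine ⟨q x₀, hpos x₀ (ne_zero_of_mem_unit_sphere ⟨x₀, hx₀⟩), fun x => ?_⟩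
  rcases eq_or_ne x 0 with rfl | hx
  · simp [hq0]
  have hnorm : ‖x‖ ≠ 0 := norm_ne_zero_iff.2 hx
  have hunit : ‖x‖⁻¹ • x ∈ Metric.sphere (0 : E) 1 := by
    simp [norm_smul, hnorm]
  calc q x₀ * ‖x‖ ^ 2 ≤ q (‖x‖⁻¹ • x) * ‖x‖ ^ 2 := by gcongr; exact hmin hunit
    _ = q x := by rw [hsmul]; field_simp

namespace SimpleGraph

variable {V : Type*} [Fintype V] (G : SimpleGraph V) [DecidableRel G.Adj]

noncomputable def dirichletForm (y : EuclideanSpace ℝ V) : ℝ :=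
  (1 / 4) * ∑ i, ∑ j, if G.Adj i j then
    (y i / √(G.degree i) - y j / √(G.degree j)) ^ 2 else 0

noncomputable def sqrtDegree : EuclideanSpace ℝ V := WithLp.toLp 2 fun i => √(G.degree i)

theorem norm_sqrtDegree : ‖G.sqrtDegree‖ = √(∑ i, (G.degree i : ℝ)) := by
  rw [EuclideanSpace.norm_eq]
  congr 1
  refine Finset.sum_congr rfl fun i _ => ?_
  rw [sqrtDegree, Real.norm_eq_abs, sq_abs, Real.sq_sqrt (Nat.cast_nonneg _)]

theorem continuous_dirichletForm : Continuous G.dirichletForm := by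
  refine continuous_const.mul (continuous_finsetSum _ fun i _ =>
    continuous_finsetSum _ fun j _ => ?_)
  split_ifs <;> fun_prop

theorem dirichletForm_smul (t : ℝ) (y : EuclideanSpace ℝ V) :
    G.dirichletForm (t • y) = t ^ 2 * G.dirichletForm y := by
  have hterm : ∀ i j, (if G.Adj i j then
      (t * y i / √(G.degree i) - t * y j / √(G.degree j)) ^ 2 else 0) =
      t ^ 2 * if G.Adj i j then (y i / √(G.degree i) - y j / √(G.degree j)) ^ 2 else 0 := by
    intro i j
    split_ifs <;> ring
  simp only [dirichletForm, PiLp.smul_apply, smul_eq_mul, hterm, ← Finset.mul_sum]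
  ring

theorem sum_sum_ite_adj (f : V → ℝ) :
    ∑ i, ∑ j, (if G.Adj i j then f i else 0) = ∑ i, G.degree i * f i := by
  refine Finset.sum_congr rfl fun i _ => ?_
  simp only [G.degree_eq_sum_if_adj (R := ℝ), Finset.sum_mul, ite_mul, one_mul, zero_mul]

theorem dirichletForm_nonneg (y : EuclideanSpace ℝ V) : 0 ≤ G.dirichletForm y := by
  unfold dirichletForm
  positivity

theorem dirichletForm_le_norm_sq (y : EuclideanSpace ℝ V) :
    G.dirichletForm y ≤ ‖y‖ ^ 2 := by
  set a : V → ℝ := fun i => y i / √(G.degree i)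
  have hsymm : ∑ i, ∑ j, (if G.Adj i j then a j ^ 2 else 0) =
      ∑ i, ∑ j, (if G.Adj i j then a i ^ 2 else 0) := by
    rw [Finset.sum_comm]
    simp_rw [G.adj_comm]
  have hweight : ∀ i, G.degree i * a i ^ 2 ≤ y i ^ 2 := fun i => by
    rw [div_pow, Real.sq_sqrt (Nat.cast_nonneg _)]
    by_cases hd : (G.degree i : ℝ) = 0
    · simpa [hd] using sq_nonneg (y i)
    · rw [mul_div_cancel₀ _ hd]
  calc G.dirichletForm y
      ≤ (1 / 4) * ∑ i, ∑ j,
          2 * ((if G.Adj i j then a i ^ 2 else 0) + (if G.Adj i j then a j ^ 2 else 0)) := by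
        unfold dirichletForm
        gcongr with i _ j _
        split_ifs
        · nlinarith [sq_nonneg (a i + a j)]
        · simp
    _ = ∑ i, G.degree i * a i ^ 2 := by
        simp only [← Finset.mul_sum, Finset.sum_add_distrib, hsymm, sum_sum_ite_adj]
        ring
    _ ≤ ∑ i, y i ^ 2 := Finset.sum_le_sum fun i _ => hweight i
    _ = ‖y‖ ^ 2 := (EuclideanSpace.real_norm_sq_eq y).symm

theorem dirichletForm_add_of_mem_span (hdeg : ∀ i, 0 < G.degree i) (y : EuclideanSpace ℝ V)
    {w : EuclideanSpace ℝ V} (hw : w ∈ ℝ ∙ G.sqrtDegree) :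
    G.dirichletForm (y + w) = G.dirichletForm y := by
  obtain ⟨t, rfl⟩ := Submodule.mem_span_singleton.1 hw
  have hshift : ∀ i, (y + t • G.sqrtDegree) i / √(G.degree i) = y i / √(G.degree i) + t :=
    fun i => by
      have : √(G.degree i : ℝ) ≠ 0 := by positivity [hdeg i]
      simp [sqrtDegree, add_div, this]
  simp only [dirichletForm, hshift, add_sub_add_right_eq_sub]

theorem dirichletForm_sub_starProjection (hdeg : ∀ i, 0 < G.degree i) (y : EuclideanSpace ℝ V) :
    G.dirichletForm (y - (ℝ ∙ G.sqrtDegree).starProjection y) = G.dirichletForm y := by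
  rw [sub_eq_add_neg]
  exact G.dirichletForm_add_of_mem_span hdeg y (neg_mem (Submodule.starProjection_apply_mem _ _))

theorem dirichletForm_eq_lapMatrix [DecidableEq V] (y : EuclideanSpace ℝ V) :
    G.dirichletForm y = toLinearMap₂' ℝ (G.lapMatrix ℝ)
      (fun i => y i / √(G.degree i)) (fun i => y i / √(G.degree i)) / 2 := by
  rw [lapMatrix_toLinearMap₂', dirichletForm]
  ring

theorem dirichletForm_pos [DecidableEq V] (hconn : G.Connected) (hdeg : ∀ i, 0 < G.degree i)
    {y : EuclideanSpace ℝ V} (hy : y ∈ (ℝ ∙ G.sqrtDegree)ᗮ) (hy0 : y ≠ 0) :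
    0 < G.dirichletForm y := by
  refine (G.dirichletForm_nonneg y).lt_of_ne fun h => hy0 ?_
  set a : V → ℝ := fun i => y i / √(G.degree i)
  have hconst : ∀ i j, a i = a j := by
    have : toLinearMap₂' ℝ (G.lapMatrix ℝ) a a = 0 := by
      linarith [G.dirichletForm_eq_lapMatrix y]
    exact fun i j => (G.lapMatrix_toLinearMap₂'_apply'_eq_zero_iff_forall_reachable a).1 this i j
      (hconn.preconnected i j)
  obtain ⟨i₀⟩ := hconn.nonempty
  have hspan : y ∈ ℝ ∙ G.sqrtDegree := by
    refine Submodule.mem_span_singleton.2 ⟨a i₀, ?_⟩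
    ext i
    have : √(G.degree i : ℝ) ≠ 0 := by positivity [hdeg i]
    simp [sqrtDegree, hconst i₀ i, a, this]
  simpa using (Submodule.inf_orthogonal_eq_bot _).le ⟨hspan, hy⟩

theorem exists_pos_mul_norm_sq_le_dirichletForm [DecidableEq V] (hconn : G.Connected)
    (hdeg : ∀ i, 0 < G.degree i) :
    ∃ c > 0, ∀ y ∈ (ℝ ∙ G.sqrtDegree)ᗮ, c * ‖y‖ ^ 2 ≤ G.dirichletForm y := by
  obtain ⟨c, hc, h⟩ := exists_pos_mul_norm_sq_le
    (q := fun w : (ℝ ∙ G.sqrtDegree)ᗮ => G.dirichletForm w)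
    (G.continuous_dirichletForm.comp continuous_subtype_val) (fun t w => G.dirichletForm_smul t w)
    (fun w hw => G.dirichletForm_pos hconn hdeg w.2 (by simpa using hw))
  exact ⟨c, hc, fun y hy => h ⟨y, hy⟩⟩

end SimpleGraph

theorem muV_eq_sum_norm_sq {n k : ℕ} {v : Fin n → ℝ} (hv : ‖WithLp.toLp 2 v‖ = 1)
    (X : Matrix (Fin n) (Fin k) ℝ) :
    muV v X = ∑ c, ‖WithLp.toLp 2 (Xᵀ c) -
      (ℝ ∙ WithLp.toLp 2 v).starProjection (WithLp.toLp 2 (Xᵀ c))‖ ^ 2 := by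
  unfold muV
  rw [Finset.sum_comm]
  refine Finset.sum_congr rfl fun c _ => ?_
  rw [EuclideanSpace.real_norm_sq_eq, Submodule.starProjection_singleton, hv]
  refine Finset.sum_congr rfl fun r _ => ?_
  simp only [Matrix.sub_apply, Matrix.mul_apply, Matrix.of_apply, PiLp.sub_apply,
    PiLp.smul_apply, PiLp.inner_apply, Matrix.transpose_apply, smul_eq_mul, one_pow,
    RCLike.inner_apply, conj_trivial, RCLike.ofReal_one, div_one, Finset.sum_mul]
  congr 2
  refine Finset.sum_congr rfl fun m _ => ?_
  ring

theorem dirichletEnergy_eq_sum_dirichletForm {n k : ℕ} (G : SimpleGraph (Fin n))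
    [DecidableRel G.Adj] (X : Matrix (Fin n) (Fin k) ℝ) :
    dirichletEnergy G X = ∑ c, G.dirichletForm (WithLp.toLp 2 (Xᵀ c)) := by
  simp only [dirichletEnergy, SimpleGraph.dirichletForm, ← Finset.mul_sum, Finset.ite_sum_zero,
    Matrix.transpose_apply]
  congr 1
  conv_rhs => rw [Finset.sum_comm]; enter [2, i]; rw [Finset.sum_comm]

/-- For a connected graph with positive degrees and
`v = D^{1/2}·1/‖D^{1/2}·1‖₂`, the Dirichlet energy is equivalent to `μ_v`: there are
`C₁, C₂ > 0` with `C₁·μ_v(X) ≤ E(X) ≤ C₂·μ_v(X)` for all `X ∈ ℝ^{n×k}`. -/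
theorem stmt_17 {n k : ℕ}
    (G : SimpleGraph (Fin n)) [DecidableRel G.Adj]
    (hconn : G.Connected)
    (hdeg : ∀ i, 0 < G.degree i)
    (v : Fin n → ℝ)
    (hv : v = fun i => Real.sqrt (G.degree i) / Real.sqrt (∑ j, (G.degree j : ℝ))) :
    ∃ C₁ > (0 : ℝ), ∃ C₂ > (0 : ℝ), ∀ X : Matrix (Fin n) (Fin k) ℝ,
      C₁ * muV v X ≤ dirichletEnergy G X ∧ dirichletEnergy G X ≤ C₂ * muV v X := by
  have hnorm_pos : 0 < ‖G.sqrtDegree‖ := by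
    have := hconn.nonempty
    rw [G.norm_sqrtDegree]
    exact Real.sqrt_pos.2
      (Finset.sum_pos (fun i _ => by exact_mod_cast hdeg i) Finset.univ_nonempty)
  have hv_smul : WithLp.toLp 2 v = ‖G.sqrtDegree‖⁻¹ • G.sqrtDegree := by
    rw [G.norm_sqrtDegree]
    ext i
    simp [hv, SimpleGraph.sqrtDegree, div_eq_inv_mul]
  have hv_norm : ‖WithLp.toLp 2 v‖ = 1 := by
    rw [hv_smul, norm_smul, norm_inv, norm_norm, inv_mul_cancel₀ hnorm_pos.ne']
  have hv_span : (ℝ ∙ WithLp.toLp 2 v) = ℝ ∙ G.sqrtDegree := by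
    rw [hv_smul]
    exact Submodule.span_singleton_smul_eq (inv_pos.2 hnorm_pos).ne'.isUnit _
  obtain ⟨c, hc, hlower⟩ := G.exists_pos_mul_norm_sq_le_dirichletForm hconn hdeg
  refine ⟨c, hc, 1, one_pos, fun X => ?_⟩
  rw [muV_eq_sum_norm_sq hv_norm, dirichletEnergy_eq_sum_dirichletForm, Finset.mul_sum,
    Finset.mul_sum]
  simp only [hv_span, one_mul]
  constructor <;> refine Finset.sum_le_sum fun c _ => ?_ <;>
    rw [← G.dirichletForm_sub_starProjection hdeg]
  · exact hlower _ (Submodule.sub_starProjection_mem_orthogonal _)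
  · exact G.dirichletForm_le_norm_sq _
end

section
/- Assume: (i) for every nonzero x ∈ ℝⁿ with 1ᵀ·x = 0, the vector A·x is not in span{1}; (ii) for every t ≥ 0 and every column index i, if (A·X^{(t)})_{:,i} ∉ span{1} then (A·X^{(t)}·W^{(t)})_{:,i} ∉ span{1}; (iii) every column of X^{(0)} is nonzero and satisfies 1ᵀ·X^{(0)}_{:,i} = 0. Then for every unit vector v ∈ ℝⁿ with vᵀ·1 ≠ 0, setting c := vᵀ·1/√n, we have μ_v(X^{(t)}) ≥ k·c² for all t ≥ 1. -/
open Matrix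

lemma bn_props {n : ℕ} (y : Fin n → ℝ) (h : ¬ ∃ c : ℝ, ∀ r, y r = c) :
    (∑ r, bn y r = 0) ∧ (∑ r, (bn y r) ^ 2 = 1) := by
  have hn : 0 < n := by
    rcases Nat.eq_zero_or_pos n with h0 | h0
    · exact absurd ⟨0, fun r => absurd h0.le r.pos.not_ge⟩ h
    · exact h0
  have hnR : (n : ℝ) ≠ 0 := Nat.cast_ne_zero.mpr hn.ne'
  set m : ℝ := (∑ j, y j) / n with hm
  have hzsum : ∑ r, (y r - m) = 0 := by
    rw [Finset.sum_sub_distrib, Finset.sum_const, Finset.card_univ, Fintype.card_fin,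
      nsmul_eq_mul, hm]
    field_simp
    ring
  have hzne : ∃ r, y r - m ≠ 0 := by
    by_contra hc
    push_neg at hc
    exact h ⟨m, fun r => by have := hc r; linarith⟩
  have hs2 : 0 < ∑ r, (y r - m) ^ 2 := by
    obtain ⟨r, hr⟩ := hzne
    exact Finset.sum_pos' (fun i _ => sq_nonneg _) ⟨r, Finset.mem_univ r, by positivity⟩
  have hsp : 0 < Real.sqrt (∑ r, (y r - m) ^ 2) := Real.sqrt_pos.mpr hs2
  have hbn : ∀ r, bn y r = (Real.sqrt (∑ i, (y i - m) ^ 2))⁻¹ * (y r - m) := by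
    intro r; simp only [bn, Pi.smul_apply, smul_eq_mul, ← hm]
  constructor
  · simp only [hbn, ← Finset.mul_sum, hzsum, mul_zero]
  · have e : ∀ r : Fin n, (bn y r) ^ 2
        = ((Real.sqrt (∑ i, (y i - m) ^ 2))⁻¹) ^ 2 * (y r - m) ^ 2 := by
      intro r; rw [hbn]; ring
    rw [Finset.sum_congr rfl fun r _ => e r, ← Finset.mul_sum, inv_pow,
      Real.sq_sqrt hs2.le, inv_mul_cancel₀ hs2.ne']

lemma col_bound {n : ℕ} (hn : 0 < n) (v x : Fin n → ℝ)
    (hv : ∑ r, v r ^ 2 = 1) (hx0 : ∑ r, x r = 0) (hx1 : ∑ r, x r ^ 2 = 1) :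
    ((∑ r, v r) / Real.sqrt n) ^ 2 ≤ ∑ r, (x r - v r * (∑ b, v b * x b)) ^ 2 := by
  have hnR : (0:ℝ) < n := Nat.cast_pos.mpr hn
  set p := ∑ b, v b * x b with hp
  set u : ℝ := (Real.sqrt n)⁻¹ with hu
  have hsq : Real.sqrt (n:ℝ) ^ 2 = n := Real.sq_sqrt hnR.le
  have hun : u ^ 2 * n = 1 := by
    rw [hu, inv_pow, hsq]
    field_simp
  set c : ℝ := (∑ r, v r) * u with hc
  have hcd : (∑ r, v r) / Real.sqrt n = c := by rw [hc, hu, div_eq_mul_inv]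
  have hb : 0 ≤ ∑ r, (v r - p * x r - c * u) ^ 2 :=
    Finset.sum_nonneg fun _ _ => sq_nonneg _
  have hexp : ∑ r, (v r - p * x r - c * u) ^ 2 = 1 - p ^ 2 - c ^ 2 := by
    have e : ∀ r : Fin n, (v r - p * x r - c * u) ^ 2
        = v r ^ 2 + p ^ 2 * x r ^ 2 + c ^ 2 * u ^ 2
          - (2 * p) * (v r * x r) - (2 * (c * u)) * v r + (2 * (p * c * u)) * x r := by
      intro r; ring
    rw [Finset.sum_congr rfl fun r _ => e r]
    simp only [Finset.sum_add_distrib, Finset.sum_sub_distrib, ← Finset.mul_sum,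
      Finset.sum_const, Finset.card_univ, Fintype.card_fin, nsmul_eq_mul]
    rw [hv, hx1, hx0, ← hp]
    have hcu : c * u * (∑ r, v r) = c ^ 2 := by
      rw [hc]; ring
    nlinarith [hun, hcu]
  have hexp2 : ∑ r, (x r - v r * p) ^ 2 = 1 - p ^ 2 := by
    have e : ∀ r : Fin n, (x r - v r * p) ^ 2
        = x r ^ 2 - (2 * p) * (v r * x r) + p ^ 2 * v r ^ 2 := by
      intro r; ring
    rw [Finset.sum_congr rfl fun r _ => e r]
    simp only [Finset.sum_add_distrib, Finset.sum_sub_distrib, ← Finset.mul_sum]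
    rw [hv, hx1, ← hp]
    ring
  rw [hcd, hexp2]
  nlinarith [hb, hexp]

/-- For the (possibly nonlinear) GNN with BatchNorm
`X^{(t+1)} = BN(σ(A·X^{(t)}·W^{(t)}))` with `σ` injective (applied entrywise): assume
(i) `A` maps nonzero mean-centered vectors outside `span{1}`,
(ii) multiplication by `W^{(t)}` never sends a non-constant column of `A·X^{(t)}` to a
constant column, and (iii) every column of `X^{(0)}` is nonzero and mean-centered. Then for
every unit vector `v` with `vᵀ·1 ≠ 0`, setting `c := vᵀ·1/√n`, `μ_v(X^{(t)}) ≥ k·c²` for all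
`t ≥ 1`. -/
theorem stmt_19 {n k : ℕ}
    (A : Matrix (Fin n) (Fin n) ℝ)
    (σ : ℝ → ℝ) (hσ : Function.Injective σ)
    (X0 : Matrix (Fin n) (Fin k) ℝ)
    (W : ℕ → Matrix (Fin k) (Fin k) ℝ)
    (X : ℕ → Matrix (Fin n) (Fin k) ℝ)
    (hX0 : X 0 = X0)
    (hXrec : ∀ t, X (t + 1) = BN ((A * X t * W t).map σ))
    -- (i)
    (hi : ∀ x : Fin n → ℝ, x ≠ 0 → (∑ r, x r = 0) →
      ¬ ∃ c : ℝ, A *ᵥ x = fun _ => c)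
    -- (ii)
    (hii : ∀ (t : ℕ) (i : Fin k),
      (¬ ∃ c : ℝ, ∀ r, (A * X t) r i = c) → (¬ ∃ c : ℝ, ∀ r, (A * X t * W t) r i = c))
    -- (iii)
    (hiii : ∀ i : Fin k, (fun r => X0 r i) ≠ 0 ∧ ∑ r, X0 r i = 0) :
    ∀ v : Fin n → ℝ, Real.sqrt (∑ r, v r ^ 2) = 1 → (∑ r, v r) ≠ 0 →
      ∀ c : ℝ, c = (∑ r, v r) / Real.sqrt n →
      ∀ t, 1 ≤ t → k * c ^ 2 ≤ muV v (X t) := by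
  -- nonconstancy of columns of σ(A X^t W^t), given column properties of X^t
  have noncon : ∀ (t : ℕ) (i : Fin k),
      ((fun r => X t r i) ≠ 0 ∧ ∑ r, X t r i = 0) →
      ¬ ∃ c : ℝ, ∀ r, ((A * X t * W t).map σ) r i = c := by
    intro t i ⟨hne, hsum⟩
    have h1 : ¬ ∃ c : ℝ, ∀ r, (A * X t) r i = c := by
      rintro ⟨c, hc⟩
      refine hi (fun r => X t r i) hne hsum ⟨c, funext fun r => ?_⟩
      rw [← hc r]
      simp [Matrix.mulVec, Matrix.mul_apply, dotProduct]
    have h2 := hii t i h1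
    rintro ⟨c, hc⟩
    rcases Nat.eq_zero_or_pos n with h0 | h0
    · exact h2 ⟨0, fun r => absurd h0.le r.pos.not_ge⟩
    · have r0 : Fin n := ⟨0, h0⟩
      refine h2 ⟨(A * X t * W t) r0 i, fun r => hσ ?_⟩
      simp only [Matrix.map_apply] at hc
      rw [hc r, hc r0]
  -- invariant: columns of X t are nonzero and mean-centered
  have inv : ∀ t, ∀ i : Fin k, (fun r => X t r i) ≠ 0 ∧ ∑ r, X t r i = 0 := by
    intro t
    induction t with
    | zero => simpa [hX0] using hiii
    | succ s ih =>
      intro i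
      have hnc := noncon s i (ih i)
      have hb := bn_props (fun r => ((A * X s * W s).map σ) r i) hnc
      have hcol : ∀ r, X (s + 1) r i = bn (fun a => ((A * X s * W s).map σ) a i) r := by
        intro r; rw [hXrec s]; rfl
      constructor
      · intro h0
        have h1 := hb.2
        have : ∀ r, bn (fun a => ((A * X s * W s).map σ) a i) r = 0 := by
          intro r
          rw [← hcol r]
          exact congrFun h0 r
        rw [Finset.sum_congr rfl fun r _ => by rw [this r]] at h1
        simp at h1
      · rw [Finset.sum_congr rfl fun r _ => hcol r]
        exact hb.1
  -- unit norm of columns at time ≥ 1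
  have keysq : ∀ s, ∀ i : Fin k, ∑ r, (X (s + 1) r i) ^ 2 = 1 := by
    intro s i
    have hnc := noncon s i (inv s i)
    have hb := bn_props (fun r => ((A * X s * W s).map σ) r i) hnc
    have hcol : ∀ r, X (s + 1) r i = bn (fun a => ((A * X s * W s).map σ) a i) r := by
      intro r; rw [hXrec s]; rfl
    rw [Finset.sum_congr rfl fun r _ => by rw [hcol r]]
    exact hb.2
  intro v hv hv1 c hcdef t ht
  obtain ⟨s, rfl⟩ : ∃ s, t = s + 1 := ⟨t - 1, by omega⟩
  have hn : 0 < n := by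
    rcases Nat.eq_zero_or_pos n with h0 | h0
    · exfalso; apply hv1; subst h0; simp
    · exact h0
  have hv2 : ∑ r, v r ^ 2 = 1 := Real.sqrt_eq_one.mp hv
  have hmu : muV v (X (s + 1))
      = ∑ j, ∑ r, (X (s + 1) r j - v r * (∑ b, v b * X (s + 1) b j)) ^ 2 := by
    rw [muV, Finset.sum_comm]
    refine Finset.sum_congr rfl fun j _ => Finset.sum_congr rfl fun r _ => ?_
    congr 1
    simp [Matrix.sub_apply, Matrix.mul_apply, Finset.mul_sum, mul_assoc]
  rw [hmu, hcdef]
  calc (k : ℝ) * ((∑ r, v r) / Real.sqrt n) ^ 2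
      = ∑ _j : Fin k, ((∑ r, v r) / Real.sqrt n) ^ 2 := by
        simp [Finset.sum_const, Finset.card_univ, mul_comm]
    _ ≤ ∑ j, ∑ r, (X (s + 1) r j - v r * (∑ b, v b * X (s + 1) b j)) ^ 2 := by
        refine Finset.sum_le_sum fun j _ => ?_
        exact col_bound hn v (fun r => X (s + 1) r j) hv2 (inv (s + 1) j).2 (keysq s j)
end
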